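/- arXiv:1410.0056 — 7 statements merged into one kernel-verified Lean document; each statement's English description precedes it below -/
import Mathlib

section
/- Let d ≥ 1 and n ≥ 1. There exists an antipodal n-fold cover of the sphere S^d consisting of d + 2n open sets in which every point of S^d is covered at most d + n times (i.e., every point lies in at most d + n of the sets). (Upper bound of Theorem 2: Q(d,n) ≤ d + n.) -/
noncomputable section

open scoped RealInnerProductSpace

/-- The unit sphere `S^d = { x ∈ ℝ^{d+1} : ‖x‖ = 1 }`. -/
def sphereSet (d : ℕ) : Set (EuclideanSpace ℝ (Fin (d + 1))) :=
  Metric.sphere 0 1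

/-- `A` is open in the subspace topology of `S^d`. -/
def IsOpenInSphere (d : ℕ) (A : Set (EuclideanSpace ℝ (Fin (d + 1)))) : Prop :=
  ∃ U : Set (EuclideanSpace ℝ (Fin (d + 1))), IsOpen U ∧ A = U ∩ sphereSet d

/-- The number of indices `i` with `x ∈ F i` (how many times `x` is covered). -/
def covCount {d k : ℕ} (F : Fin k → Set (EuclideanSpace ℝ (Fin (d + 1))))
    (x : EuclideanSpace ℝ (Fin (d + 1))) : ℕ :=
  Nat.card {i : Fin k // x ∈ F i}

/-- The family is antipodal: no set contains a pair of antipodal points. -/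
def IsAntipodalFamily {d k : ℕ} (F : Fin k → Set (EuclideanSpace ℝ (Fin (d + 1)))) : Prop :=
  ∀ i : Fin k, ∀ x ∈ F i, -x ∉ F i

/-- `F` is an `n`-fold cover of `S^d` by open subsets of the sphere:
each set is a subset of the sphere, open in the subspace topology, and every
point of the sphere is covered at least `n` times. -/
def IsNFoldCover {d k : ℕ} (n : ℕ) (F : Fin k → Set (EuclideanSpace ℝ (Fin (d + 1)))) : Prop :=
  (∀ i, F i ⊆ sphereSet d) ∧ (∀ i, IsOpenInSphere d (F i)) ∧
    (∀ x ∈ sphereSet d, n ≤ covCount F x)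

/-- The open northern hemisphere of `S^d`. -/
def openNorth (d : ℕ) : Set (EuclideanSpace ℝ (Fin (d + 1))) :=
  {x ∈ sphereSet d | 0 < x (Fin.last d)}

/-- The closed northern hemisphere of `S^d`. -/
def closedNorth (d : ℕ) : Set (EuclideanSpace ℝ (Fin (d + 1))) :=
  {x ∈ sphereSet d | 0 ≤ x (Fin.last d)}

/-- `F` is an `(n,m)`-fold cover of `S^d`: an `n`-fold cover in which every point
of the open northern hemisphere is covered at least `m` times. -/
def IsNMFoldCover {d k : ℕ} (n m : ℕ)
    (F : Fin k → Set (EuclideanSpace ℝ (Fin (d + 1)))) : Prop :=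
  IsNFoldCover n F ∧ ∀ x ∈ openNorth d, m ≤ covCount F x

/-- `F` is an `(n,m)`-closed-hemisphere-fold cover of `S^d`: an `n`-fold cover in
which every point of the closed northern hemisphere is covered at least `m` times. -/
def IsNMBarFoldCover {d k : ℕ} (n m : ℕ)
    (F : Fin k → Set (EuclideanSpace ℝ (Fin (d + 1)))) : Prop :=
  IsNFoldCover n F ∧ ∀ x ∈ closedNorth d, m ≤ covCount F x

/-!
Identify `x ∈ S^d` with the nonzero polynomial `p_x(t) = ∑ x_j t^j` of degree at most `d` and let
`F_i` (`0 ≤ i < d + 2n`) be the set of `x` with `(-1)^i p_x(i) > 0`. Since `p_{-x} = -p_x`, the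
family is antipodal and the index sets covering `x` and `-x` are disjoint, so it suffices that every
point is covered at least `n` times. The sequence `(-1)^i p(i)` flips sign between consecutive
indices except where `p` itself changes sign, which happens at most `d` times; hence it has at least
`2n` runs, half of them positive. Integer roots of `p` are first removed by a small perturbation
that can only shrink the set of positive indices.
-/

open Polynomial Finset Filter Topology

/-- The summand `if 0 < s N then 1 else 0` strengthens the invariant so the induction closes. -/
lemma add_ite_le_two_mul_card_pos_add_card_sameSign (s : ℕ → ℝ) (N : ℕ) (hs : ∀ i ≤ N, s i ≠ 0) :
    N + (if 0 < s N then 1 else 0) ≤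
      2 * #{i ∈ range (N + 1) | 0 < s i} + #{i ∈ range N | 0 < s i * s (i + 1)} := by
  induction N with
  | zero => simp only [card_filter, zero_add, sum_range_one, sum_range_zero]; split_ifs <;> omega
  | succ N ih =>
    specialize ih fun i hi => hs i (by omega)
    simp only [card_filter, sum_range_succ _ (N + 1), sum_range_succ _ N] at ih ⊢
    rcases (hs N (by omega)).lt_or_gt with hN | hN <;>
      rcases (hs (N + 1) le_rfl).lt_or_gt with hN1 | hN1 <;>
      simp only [hN, hN1, hN.not_gt, hN1.not_gt, mul_pos_of_neg_of_neg, mul_pos,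
        (mul_neg_of_pos_of_neg _ _).not_gt, (mul_neg_of_neg_of_pos _ _).not_gt, if_true,
        if_false] at ih ⊢ <;>
      omega

lemma le_two_mul_card_pos_add_card_sameSign (s : ℕ → ℝ) (M : ℕ) (hs : ∀ i < M, s i ≠ 0) :
    M ≤ 2 * #{i ∈ range M | 0 < s i} + #{i ∈ range (M - 1) | 0 < s i * s (i + 1)} + 1 := by
  cases M with
  | zero => simp
  | succ N =>
    have := add_ite_le_two_mul_card_pos_add_card_sameSign s N fun i hi => hs i (by omega)
    simp only [add_tsub_cancel_right]
    omega

lemma card_le_natDegree_of_injOn_isRoot {R ι : Type*} [CommRing R] [IsDomain R] {p : R[X]}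
    (hp : p ≠ 0) {s : Finset ι} {f : ι → R} (hf : Set.InjOn f s)
    (hroot : ∀ i ∈ s, p.IsRoot (f i)) : #s ≤ p.natDegree := by
  classical
  rw [← card_image_of_injOn hf]
  refine card_le_degree_of_subset_roots fun x hx => ?_
  obtain ⟨i, hi, rfl⟩ := mem_image.1 hx
  exact (mem_roots hp).2 (hroot i hi)

lemma exists_isRoot_mem_Ioo_of_eval_mul_eval_neg {p : ℝ[X]} {a b : ℝ} (hab : a ≤ b)
    (h : p.eval a * p.eval b < 0) : ∃ r ∈ Set.Ioo a b, p.IsRoot r := by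
  rcases mul_neg_iff.1 h with ⟨ha, hb⟩ | ⟨ha, hb⟩
  · exact intermediate_value_Ioo' hab p.continuous.continuousOn ⟨hb, ha⟩
  · exact intermediate_value_Ioo hab p.continuous.continuousOn ⟨ha, hb⟩

lemma card_signChanges_le_natDegree (p : ℝ[X]) (N : ℕ) :
    #{i ∈ range N | p.eval ((i : ℕ) : ℝ) * p.eval ((i + 1 : ℕ) : ℝ) < 0} ≤ p.natDegree := by
  rcases eq_or_ne p 0 with rfl | hp
  · simp
  have hroot : ∀ i ∈ {i ∈ range N | p.eval ((i : ℕ) : ℝ) * p.eval ((i + 1 : ℕ) : ℝ) < 0},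
      ∃ r ∈ Set.Ioo (i : ℝ) ((i + 1 : ℕ) : ℝ), p.IsRoot r := fun i hi => by
    simpa using exists_isRoot_mem_Ioo_of_eval_mul_eval_neg (by simp) (mem_filter.1 hi).2
  choose! r hr hrroot using hroot
  refine card_le_natDegree_of_injOn_isRoot hp (fun i hi j hj hij => ?_) hrroot
  have hij : (i : ℝ) < ((j + 1 : ℕ) : ℝ) ∧ (j : ℝ) < ((i + 1 : ℕ) : ℝ) :=
    ⟨(hr i hi).1.trans_le (hij ▸ (hr j hj).2.le), (hr j hj).1.trans_le (hij ▸ (hr i hi).2.le)⟩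
  norm_cast at hij
  omega

noncomputable def altPositive (p : ℝ[X]) (N : ℕ) : Finset ℕ :=
  {i ∈ range N | 0 < (-1) ^ i * p.eval (i : ℝ)}

lemma neg_one_pow_mul_self (i : ℕ) : (-1 : ℝ) ^ i * (-1) ^ i = 1 := by
  rw [← mul_pow, neg_one_mul, neg_neg, one_pow]

/-- With `g` interpolating `(-1)^i` at the integer roots of `p`, `(-1)^i (p - ε g)(i)` equals `-ε`
at those roots and keeps the sign of `(-1)^i p(i)` elsewhere once `ε > 0` is small. -/
lemma exists_altPositive_subset {p : ℝ[X]} (hp : p ≠ 0) (N : ℕ) :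
    ∃ q : ℝ[X], q.natDegree ≤ p.natDegree ∧ (∀ i < N, q.eval (i : ℝ) ≠ 0) ∧
      altPositive q N ⊆ altPositive p N := by
  classical
  set Z : Finset ℕ := {i ∈ range N | p.IsRoot (i : ℝ)}
  have hinj : Set.InjOn (fun i : ℕ => (i : ℝ)) Z := Nat.cast_injective.injOn
  set g := Lagrange.interpolate Z (fun i : ℕ => (i : ℝ)) fun i => (-1) ^ i
  have hg_node : ∀ i ∈ Z, g.eval (i : ℝ) = (-1) ^ i := fun i hi =>
    Lagrange.eval_interpolate_at_node _ hinj hi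
  have hg_deg : g.natDegree ≤ p.natDegree := by
    rw [natDegree_le_iff_degree_le]
    refine (Lagrange.degree_interpolate_lt _ hinj).le.trans ?_
    exact_mod_cast card_le_natDegree_of_injOn_isRoot hp hinj fun i hi => (mem_filter.1 hi).2
  have hevent : ∀ i ∈ range N, ∀ᶠ ε in 𝓝[>] (0 : ℝ),
      (p - C ε * g).eval (i : ℝ) ≠ 0 ∧
        (0 < (-1) ^ i * (p - C ε * g).eval (i : ℝ) → 0 < (-1) ^ i * p.eval (i : ℝ)) := by
    intro i hi
    by_cases hroot : p.IsRoot (i : ℝ)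
    · filter_upwards [self_mem_nhdsWithin] with ε (hε : 0 < ε)
      have hval : (-1) ^ i * (p - C ε * g).eval (i : ℝ) = -ε := by
        rw [eval_sub, eval_C_mul, hg_node i (mem_filter.2 ⟨hi, hroot⟩), hroot.eq_zero]
        linear_combination -ε * neg_one_pow_mul_self i
      refine ⟨fun h => ?_, fun h => ?_⟩ <;> simp_all only [mul_zero] <;> linarith
    · set a := (-1) ^ i * p.eval (i : ℝ)
      have ha : 0 < a * a := mul_self_pos.2 (mul_ne_zero (by simp) hroot)
      have hlim : Tendsto (fun ε => a * ((-1) ^ i * (p - C ε * g).eval (i : ℝ))) (𝓝[>] 0)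
          (𝓝 (a * a)) := by
        have : Continuous fun ε => a * ((-1) ^ i * (p.eval (i : ℝ) - ε * g.eval (i : ℝ))) := by
          fun_prop
        simpa [a] using (this.tendsto 0).mono_left nhdsWithin_le_nhds
      filter_upwards [hlim.eventually_const_lt ha] with ε hε
      exact ⟨fun h => by simp [h] at hε, fun h => pos_of_mul_pos_left hε h.le⟩
  obtain ⟨ε, hε⟩ := ((eventually_all_finset _).2 hevent).exists
  refine ⟨p - C ε * g, ?_, fun i hi => (hε i (mem_range.2 hi)).1, fun i hi => ?_⟩
  · exact (natDegree_sub_le _ _).trans (max_le le_rfl ((natDegree_C_mul_le _ _).trans hg_deg))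
  · rw [altPositive, mem_filter] at hi ⊢
    exact ⟨hi.1, (hε i hi.1).2 hi.2⟩

lemma card_altPositive_add_card_altPositive_neg_le (p : ℝ[X]) (N : ℕ) :
    #(altPositive p N) + #(altPositive (-p) N) ≤ N := by
  rw [← card_union_of_disjoint]
  · exact (card_le_card (union_subset (filter_subset _ _) (filter_subset _ _))).trans_eq
      (card_range N)
  · refine disjoint_filter.2 fun i _ hpos hneg => ?_
    rw [eval_neg, mul_neg] at hneg
    linarith

theorem le_card_altPositive {p : ℝ[X]} (hp : p ≠ 0) {d : ℕ} (hdeg : p.natDegree ≤ d) (n : ℕ) :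
    n ≤ #(altPositive p (d + 2 * n)) := by
  obtain ⟨q, hq_deg, hq_ne, hqp⟩ := exists_altPositive_subset hp (d + 2 * n)
  have hcount := le_two_mul_card_pos_add_card_sameSign (fun i => (-1) ^ i * q.eval (i : ℝ))
    (d + 2 * n) fun i hi => mul_ne_zero (by simp) (hq_ne i hi)
  have hsame : #{i ∈ range (d + 2 * n - 1) |
      0 < (-1) ^ i * q.eval ((i : ℕ) : ℝ) * ((-1) ^ (i + 1) * q.eval ((i + 1 : ℕ) : ℝ))} ≤ d := by
    refine le_of_eq_of_le (congrArg card (filter_congr fun i _ => ?_))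
      ((card_signChanges_le_natDegree q _).trans (hq_deg.trans hdeg))
    rw [← neg_pos]
    congr! 1
    linear_combination (-(q.eval (i : ℝ) * q.eval ((i + 1 : ℕ) : ℝ))) * neg_one_pow_mul_self i
  have hsub := card_le_card hqp
  simp only [altPositive] at hsub ⊢
  omega

section MomentCover

variable {d : ℕ}

lemma ofFn_ofLp_ne_zero {x : EuclideanSpace ℝ (Fin (d + 1))} (hx : x ∈ sphereSet d) :
    ofFn (d + 1) x.ofLp ≠ 0 := by
  rw [ne_eq, map_eq_zero_iff _ (injective_ofFn _), WithLp.ofLp_eq_zero]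
  exact ne_zero_of_mem_unit_sphere ⟨x, hx⟩

noncomputable def momentCover (d N : ℕ) : Fin N → Set (EuclideanSpace ℝ (Fin (d + 1))) :=
  fun i => {x ∈ sphereSet d | 0 < (-1) ^ (i : ℕ) * (ofFn (d + 1) x.ofLp).eval (i : ℝ)}

lemma covCount_momentCover {N : ℕ} {x : EuclideanSpace ℝ (Fin (d + 1))} (hx : x ∈ sphereSet d) :
    covCount (momentCover d N) x = #(altPositive (ofFn (d + 1) x.ofLp) N) := by
  classical
  rw [covCount, Nat.card_eq_fintype_card, Fintype.card_subtype, ← card_map Fin.valEmbedding]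
  congr 1
  ext i
  simp [altPositive, momentCover, hx, Fin.exists_iff, and_comm]

lemma isOpenInSphere_momentCover {N : ℕ} (i : Fin N) : IsOpenInSphere d (momentCover d N i) := by
  refine ⟨{x | 0 < (-1) ^ (i : ℕ) * (ofFn (d + 1) x.ofLp).eval (i : ℝ)},
    isOpen_lt continuous_const (continuous_const.mul ?_), ?_⟩
  · exact (leval (i : ℝ) ∘ₗ ofFn (d + 1) ∘ₗ
      (WithLp.linearEquiv 2 ℝ (Fin (d + 1) → ℝ)).toLinearMap).continuous_of_finiteDimensional
  · ext x
    simp [momentCover, and_comm]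

lemma isAntipodalFamily_momentCover (N : ℕ) : IsAntipodalFamily (momentCover d N) := by
  intro i x hx hnx
  simp only [momentCover, Set.mem_sep_iff, WithLp.ofLp_neg, map_neg, eval_neg, mul_neg] at hx hnx
  linarith [hx.2, hnx.2]

end MomentCover

theorem Q_upper_bound_general (d n : ℕ) :
    ∃ F : Fin (d + 2 * n) → Set (EuclideanSpace ℝ (Fin (d + 1))),
      IsNFoldCover n F ∧ IsAntipodalFamily F ∧
        ∀ x ∈ sphereSet d, covCount F x ≤ d + n := by
  have hlower : ∀ x ∈ sphereSet d, n ≤ #(altPositive (ofFn (d + 1) x.ofLp) (d + 2 * n)) :=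
    fun x hx => le_card_altPositive (ofFn_ofLp_ne_zero hx)
      (Nat.le_of_lt_succ (ofFn_natDegree_lt d.succ_pos _)) n
  refine ⟨momentCover d (d + 2 * n), ⟨fun i => Set.sep_subset _ _, isOpenInSphere_momentCover,
    fun x hx => ?_⟩, isAntipodalFamily_momentCover _, fun x hx => ?_⟩
  · exact (covCount_momentCover hx).symm ▸ hlower x hx
  · have hneg := hlower (-x) (by simpa [sphereSet] using hx)
    rw [WithLp.ofLp_neg, map_neg] at hneg
    have := card_altPositive_add_card_altPositive_neg_le (ofFn (d + 1) x.ofLp) (d + 2 * n)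
    rw [covCount_momentCover hx]
    omega

/-- Upper bound of Theorem 2: `Q(d,n) ≤ d + n`. There is an antipodal `n`-fold cover
of `S^d` with `d + 2n` open sets in which every point is covered at most `d + n` times. -/
theorem Q_upper_bound (d n : ℕ) (hd : 1 ≤ d) (hn : 1 ≤ n) :
    ∃ F : Fin (d + 2 * n) → Set (EuclideanSpace ℝ (Fin (d + 1))),
      IsNFoldCover n F ∧ IsAntipodalFamily F ∧
        ∀ x ∈ sphereSet d, covCount F x ≤ d + n :=
  Q_upper_bound_general d n
end
end

section
/- Let d ≥ 1 and m > n ≥ 1. There exists an antipodal (n,m)-closed-hemisphere-fold cover of S^d consisting of d + 2m − 1 open sets. (Upper bound of Theorem 3: f̄(d,n,m) ≤ d + 2m − 1.) -/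
noncomputable section

open scoped RealInnerProductSpace

/-!
Put the `k = d + 2m - 1` points `0, 1, …, k - 1` on the moment curve `γ t = (1, t, …, t^d)` and
take as `i`-th set the open hemisphere with pole `(-1)^(i+k+1) • γ i`; open hemispheres are
antipodal. A point `y` lies in it iff `(-1)^(i+k+1) P_y(i) > 0`, where `P_y = ∑ y_j X^j`. If `y`
lies in `g` of the sets, multiplying `P_y` by the square of `∏ (X - i)` over those indices gives a
nonzero polynomial of degree `≤ d + 2g` whose signs at the `k` points weakly alternate, so it has
at least `k - 1` roots: `k ≤ d + 2g + 1`, i.e. `g ≥ m - 1 ≥ n`. On the closed northern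
hemisphere one gains a root: on the equator `deg P_y < d`, and if `y_d > 0` then `P_y` is
positive far to the right, which extends the alternating pattern by one more point.
-/

open Polynomial Finset

namespace Polynomial

theorem alternating_neg_divByMonic {N : ℕ} {p : ℝ[X]} {t : Fin (N + 1) → ℝ}
    (halt : ∀ i : Fin (N + 1), (-1) ^ (i : ℕ) * p.eval (t i) ≤ 0) {c : ℝ} (hc : p.IsRoot c)
    (j : Fin (N + 1)) (hlt : ∀ i < j, t i < c) (hgt : ∀ i, j < i → c < t i) (i : Fin N) :
    (-1) ^ (i : ℕ) * (-(p /ₘ (X - C c))).eval (t (j.succAbove i)) ≤ 0 := by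
  have hfac := congrArg (eval (t (j.succAbove i))) (mul_divByMonic_eq_iff_isRoot.mpr hc)
  have hi := halt (j.succAbove i)
  rw [← hfac, eval_mul, eval_sub, eval_X, eval_C] at hi
  rw [eval_neg]
  rcases lt_or_ge (Fin.castSucc i) j with h | h
  · rw [Fin.succAbove_of_castSucc_lt j i h] at hi ⊢
    have := hlt _ h
    simp only [Fin.val_castSucc] at hi ⊢
    nlinarith
  · rw [Fin.succAbove_of_le_castSucc j i h] at hi ⊢
    have := hgt _ (h.trans_lt Fin.castSucc_lt_succ)
    simp only [Fin.val_succ, pow_succ] at hi ⊢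
    nlinarith

theorem le_natDegree_add_one_of_alternating {N : ℕ} {p : ℝ[X]} (hp : p ≠ 0)
    {t : Fin N → ℝ} (ht : StrictMono t)
    (halt : ∀ i : Fin N, (-1) ^ (i : ℕ) * p.eval (t i) ≤ 0) :
    N ≤ p.natDegree + 1 := by
  induction N generalizing p with
  | zero => omega
  | succ N ih =>
    rcases N with _ | N
    · omega
    -- Divide out a root at `t 1` or in `[t 0, t 1)`; the quotient alternates at the other points.
    obtain ⟨c, j, hc, hlt, hgt⟩ : ∃ (c : ℝ) (j : Fin (N + 2)), p.IsRoot c ∧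
        (∀ i < j, t i < c) ∧ ∀ i, j < i → c < t i := by
      by_cases h1 : p.eval (t 1) = 0
      · exact ⟨t 1, 1, h1, fun i hi => ht hi, fun i hi => ht hi⟩
      · have h0 : p.eval (t 0) ≤ 0 := by simpa using halt 0
        have h1' : 0 < p.eval (t 1) := lt_of_le_of_ne (by simpa using halt 1) (Ne.symm h1)
        obtain ⟨c, ⟨-, hc1⟩, hc⟩ :=
          intermediate_value_Ico (ht (show (0 : Fin (N + 2)) < 1 by simp)).le
            p.continuous.continuousOn ⟨h0, h1'⟩
        refine ⟨c, 0, hc, fun i hi => absurd hi (Fin.not_lt_zero i), fun i hi => ?_⟩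
        exact hc1.trans_le (ht.monotone (Fin.one_le_of_ne_zero hi.ne'))
    have hq : -(p /ₘ (X - C c)) ≠ 0 := by
      rw [neg_ne_zero]
      intro h0
      rw [← mul_divByMonic_eq_iff_isRoot.mpr hc, h0, mul_zero] at hp
      exact hp rfl
    have := ih hq (ht.comp (Fin.strictMono_succAbove j))
      (alternating_neg_divByMonic halt hc j hlt hgt)
    rw [natDegree_neg, natDegree_divByMonic _ (monic_X_sub_C c), natDegree_X_sub_C] at this
    have : 0 < p.natDegree := natDegree_pos_iff_degree_pos.mpr (degree_pos_of_root hp hc)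
    omega

theorem le_natDegree_add_two_mul_card_add_one {N : ℕ} {p : ℝ[X]} (hp : p ≠ 0)
    {t : Fin N → ℝ} (ht : StrictMono t) :
    N ≤ p.natDegree + 2 * #{i : Fin N | 0 < (-1) ^ (i : ℕ) * p.eval (t i)} + 1 := by
  classical
  set G : Finset (Fin N) := {i : Fin N | 0 < (-1) ^ (i : ℕ) * p.eval (t i)}
  -- Multiplying by a square that vanishes at the good points makes the signs weakly alternate.
  set s : ℝ[X] := ∏ i ∈ G, (X - C (t i))
  have hs : s.Monic := monic_prod_of_monic _ _ fun i _ => monic_X_sub_C (t i)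
  have hps : p * s ^ 2 ≠ 0 := mul_ne_zero hp (pow_ne_zero 2 hs.ne_zero)
  have halt : ∀ i : Fin N, (-1) ^ (i : ℕ) * (p * s ^ 2).eval (t i) ≤ 0 := by
    intro i
    rw [eval_mul, eval_pow, ← mul_assoc]
    by_cases hi : i ∈ G
    · have : s.eval (t i) = 0 := by
        rw [eval_prod]
        exact prod_eq_zero hi (by simp)
      simp [this]
    · exact mul_nonpos_of_nonpos_of_nonneg (not_lt.mp (by simpa [G] using hi)) (sq_nonneg _)
  have := le_natDegree_add_one_of_alternating hps ht halt
  rw [natDegree_mul hp (pow_ne_zero 2 hs.ne_zero), natDegree_pow,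
    natDegree_finsetProd_X_sub_C_eq_card] at this
  omega

section OfFn

variable {R : Type*} [Semiring R] [DecidableEq R] {d : ℕ}

theorem coeff_ofFn_last (v : Fin (d + 1) → R) : (ofFn (d + 1) v).coeff d = v (Fin.last d) :=
  ofFn_coeff_eq_val_of_lt v (Nat.lt_succ_self d)

theorem natDegree_ofFn_le (v : Fin (d + 1) → R) : (ofFn (d + 1) v).natDegree ≤ d :=
  Nat.le_of_lt_succ (ofFn_natDegree_lt (Nat.succ_pos d) v)

theorem natDegree_ofFn_lt_of_last_eq_zero {v : Fin (d + 1) → R} (hv : ofFn (d + 1) v ≠ 0)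
    (h : v (Fin.last d) = 0) :
    (ofFn (d + 1) v).natDegree < d := by
  refine (natDegree_ofFn_le v).lt_of_ne fun hd => hv (leadingCoeff_eq_zero.mp ?_)
  rw [leadingCoeff, hd, coeff_ofFn_last, h]

theorem natDegree_ofFn_of_last_ne_zero {v : Fin (d + 1) → R} (h : v (Fin.last d) ≠ 0) :
    (ofFn (d + 1) v).natDegree = d :=
  (natDegree_ofFn_le v).antisymm (le_natDegree_of_ne_zero (by rwa [coeff_ofFn_last]))

end OfFn

theorem eventually_pos_eval_ofFn {d : ℕ} (hd : 1 ≤ d) {v : Fin (d + 1) → ℝ}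
    (h : 0 < v (Fin.last d)) : ∀ᶠ T in Filter.atTop, 0 < (ofFn (d + 1) v).eval T := by
  have hdeg := natDegree_ofFn_of_last_ne_zero h.ne'
  refine (tendsto_atTop_of_leadingCoeff_nonneg _ ?_ ?_).eventually_gt_atTop 0
  · rw [← natDegree_pos_iff_degree_pos, hdeg]
    exact hd
  · rw [leadingCoeff, hdeg, coeff_ofFn_last]
    exact h.le

end Polynomial

theorem Fin.card_filter_univ_eq_of_not_last {k : ℕ} {P : Fin (k + 1) → Prop} [DecidablePred P]
    (h : ¬ P (Fin.last k)) : #{i | P i} = #{i : Fin k | P i.castSucc} := by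
  rw [card_filter, card_filter, Fin.sum_univ_castSucc, if_neg h, add_zero]

def openHemisphere (d : ℕ) (u : EuclideanSpace ℝ (Fin (d + 1))) :
    Set (EuclideanSpace ℝ (Fin (d + 1))) :=
  {y ∈ sphereSet d | 0 < ⟪u, y⟫}

def momentCurve (d : ℕ) (t : ℝ) : EuclideanSpace ℝ (Fin (d + 1)) :=
  WithLp.toLp 2 fun j => t ^ (j : ℕ)

def momentHemispheres (d k : ℕ) : Fin k → Set (EuclideanSpace ℝ (Fin (d + 1))) :=
  fun i => openHemisphere d (((-1) ^ ((i : ℕ) + k + 1) : ℝ) • momentCurve d (i : ℕ))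

section Hemispheres

variable {d k : ℕ} {u y : EuclideanSpace ℝ (Fin (d + 1))}

theorem isOpenInSphere_openHemisphere (u : EuclideanSpace ℝ (Fin (d + 1))) :
    IsOpenInSphere d (openHemisphere d u) :=
  ⟨{y | 0 < ⟪u, y⟫}, isOpen_lt continuous_const (continuous_const.inner continuous_id),
    by ext; simp [openHemisphere, and_comm]⟩

theorem neg_notMem_openHemisphere (hy : y ∈ openHemisphere d u) : -y ∉ openHemisphere d u :=
  fun hny => by
    have := hny.2
    rw [inner_neg_right] at this
    linarith [hy.2]

theorem inner_momentCurve (t : ℝ) (y : EuclideanSpace ℝ (Fin (d + 1))) :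
    ⟪momentCurve d t, y⟫ = (ofFn (d + 1) y).eval t := by
  simp [momentCurve, PiLp.inner_apply, ofFn_eq_sum_monomial, eval_finsetSum, mul_comm]

theorem ofFn_ne_zero_of_mem_sphereSet (hy : y ∈ sphereSet d) : ofFn (d + 1) y ≠ 0 := by
  rw [← (ofFn (d + 1)).map_zero, (injective_ofFn (d + 1)).ne_iff]
  intro h
  have : y = 0 := WithLp.ofLp_injective 2 h
  simp [sphereSet, this] at hy

theorem covCount_momentHemispheres (hy : y ∈ sphereSet d) :
    covCount (momentHemispheres d k) y =
      #{i : Fin k |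
        0 < (-1) ^ (i : ℕ) * ((-1 : ℝ) ^ (k + 1) • ofFn (d + 1) y).eval (i : ℝ)} := by
  classical
  rw [covCount, Nat.card_eq_fintype_card, Fintype.card_subtype]
  congr 1
  ext i
  simp [momentHemispheres, openHemisphere, hy, real_inner_smul_left, inner_momentCurve, pow_add,
    mul_assoc]

theorem le_natDegree_add_two_mul_covCount_momentHemispheres (hy : y ∈ sphereSet d) :
    k ≤ (ofFn (d + 1) y).natDegree + 2 * covCount (momentHemispheres d k) y + 1 := by
  have hp : (-1 : ℝ) ^ (k + 1) • ofFn (d + 1) y ≠ 0 :=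
    smul_ne_zero (by simp) (ofFn_ne_zero_of_mem_sphereSet hy)
  have := le_natDegree_add_two_mul_card_add_one hp (t := fun i : Fin k => ((i : ℕ) : ℝ))
    fun _ _ h => Nat.cast_lt.mpr h
  rw [natDegree_smul _ (by simp)] at this
  rwa [covCount_momentHemispheres hy]

theorem le_natDegree_add_two_mul_covCount_momentHemispheres_of_eval_pos
    (hy : y ∈ sphereSet d) {T : ℝ} (hkT : k ≤ T) (hT : 0 < (ofFn (d + 1) y).eval T) :
    k ≤ (ofFn (d + 1) y).natDegree + 2 * covCount (momentHemispheres d k) y := by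
  have hp : (-1 : ℝ) ^ (k + 1) • ofFn (d + 1) y ≠ 0 :=
    smul_ne_zero (by simp) (ofFn_ne_zero_of_mem_sphereSet hy)
  set t : Fin (k + 1) → ℝ := fun i => if (i : ℕ) < k then (i : ℕ) else T
  have ht : StrictMono t := by
    refine Fin.strictMono_iff_lt_succ.mpr fun i => ?_
    by_cases hi : (i : ℕ) + 1 < k
    · simp [t, hi]
    · have : ((i : ℕ) : ℝ) < k := by exact_mod_cast i.isLt
      simp [t, hi]
      linarith
  have := le_natDegree_add_two_mul_card_add_one hp ht
  rw [natDegree_smul _ (by simp), Fin.card_filter_univ_eq_of_not_last ?_] at this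
  · have htk : ∀ i : Fin k, t i.castSucc = i := fun i => if_pos i.isLt
    simp only [htk, Fin.val_castSucc] at this
    rw [covCount_momentHemispheres hy]
    omega
  · simp [t, pow_succ, ← mul_assoc, ← pow_add, ← two_mul, pow_mul, hT.le]

theorem le_add_two_mul_covCount_momentHemispheres (hy : y ∈ sphereSet d) :
    k ≤ d + 2 * covCount (momentHemispheres d k) y + 1 := by
  have := le_natDegree_add_two_mul_covCount_momentHemispheres (k := k) hy
  have := natDegree_ofFn_le (y : Fin (d + 1) → ℝ)
  omega

theorem le_add_two_mul_covCount_momentHemispheres_of_mem_closedNorth (hd : 1 ≤ d)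
    (hy : y ∈ closedNorth d) : k ≤ d + 2 * covCount (momentHemispheres d k) y := by
  obtain ⟨hS, hlast⟩ := hy
  rcases hlast.eq_or_lt with hzero | hpos
  · have := natDegree_ofFn_lt_of_last_eq_zero (ofFn_ne_zero_of_mem_sphereSet hS) hzero.symm
    have := le_natDegree_add_two_mul_covCount_momentHemispheres (k := k) hS
    omega
  · obtain ⟨T, hkT, hT⟩ :=
      ((Filter.eventually_ge_atTop (k : ℝ)).and (eventually_pos_eval_ofFn hd hpos)).exists
    have := le_natDegree_add_two_mul_covCount_momentHemispheres_of_eval_pos hS hkT hT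
    have := natDegree_ofFn_le (y : Fin (d + 1) → ℝ)
    omega

end Hemispheres

theorem fbar_upper_bound_general (d n m : ℕ) (hd : 1 ≤ d) (hnm : n < m) :
    ∃ F : Fin (d + 2 * m - 1) → Set (EuclideanSpace ℝ (Fin (d + 1))),
      IsNMBarFoldCover n m F ∧ IsAntipodalFamily F := by
  refine ⟨momentHemispheres d (d + 2 * m - 1),
    ⟨⟨fun _ _ hy => hy.1, fun _ => isOpenInSphere_openHemisphere _, fun y hy => ?_⟩,
      fun y hy => ?_⟩,
    fun _ _ hy => neg_notMem_openHemisphere hy⟩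
  · have := le_add_two_mul_covCount_momentHemispheres (k := d + 2 * m - 1) hy
    omega
  · have := le_add_two_mul_covCount_momentHemispheres_of_mem_closedNorth (k := d + 2 * m - 1) hd hy
    omega

/-- Upper bound of Theorem 3: `f̄(d,n,m) ≤ d + 2m − 1`. There exists an antipodal
`(n,m)`-closed-hemisphere-fold cover of `S^d` with `d + 2m - 1` open sets. -/
theorem fbar_upper_bound (d n m : ℕ) (hd : 1 ≤ d) (hn : 1 ≤ n) (hnm : n < m) :
    ∃ F : Fin (d + 2 * m - 1) → Set (EuclideanSpace ℝ (Fin (d + 1))),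
      IsNMBarFoldCover n m F ∧ IsAntipodalFamily F :=
  fbar_upper_bound_general d n m hd hnm
end
end

section
/- Let d ≥ 2. There exists an antipodal (1, ⌊d/2⌋ + 1)-fold cover of S^d consisting of d + 2 open sets. Consequently, for every m with 1 < m ≤ ⌊d/2⌋ + 1 there is an antipodal (1,m)-fold cover of S^d with d + 2 open sets. (Upper bound in Theorem 4 for m ≤ ⌊d/2⌋ + 1.) -/
noncomputable section

open scoped RealInnerProductSpace

/-! Write a point of `S^d` as `v ∈ ℝ^{d+1}` with north coordinate `t = v_{d+1}`. Let `h(v)` be the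
odd continuous median `(L_k(v) - L_k(-v)) / 2`, where `L_k` is the `k`-th smallest coordinate; when
`2k ≤ d + 2`, at least `k` coordinates satisfy `v_i ≤ h(v)`. Take the positivity sets on `S^d` of
the odd continuous functions `t + h(v) - v_i`, one for each coordinate `i`, and
`(max v + min v) / 2 - t - h(v)`: they are open and antipodal. For `t > 0` every `i` with
`v_i ≤ h(v)` contributes, giving `k` sets. If all `d + 2` functions are nonpositive at `v`, then
`max v ≤ min v`, and then `t = h(v) = 0`, so `v = 0`.
-/

open Finset

section OrderStat

variable {ι : Type*} [Fintype ι] {k : ℕ}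

/-- The `k`-th smallest entry of `v`. -/
def orderStat (hk : k ≠ 0) (hkι : k ≤ Fintype.card ι) (v : ι → ℝ) : ℝ :=
  (univ.powersetCard k).attach.inf' (by simpa [powersetCard_nonempty] using hkι) fun S =>
    S.1.sup' (card_pos.1 <| by rw [(mem_powersetCard.1 S.2).2]; omega) v

variable (hk : k ≠ 0) (hkι : k ≤ Fintype.card ι)

theorem continuous_orderStat : Continuous (orderStat hk hkι) :=
  Continuous.finset_inf'_apply _ fun _ _ =>
    Continuous.finset_sup'_apply _ fun i _ => continuous_apply i

theorem exists_card_eq_forall_le_orderStat (v : ι → ℝ) :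
    ∃ S : Finset ι, #S = k ∧ ∀ i ∈ S, v i ≤ orderStat hk hkι v := by
  obtain ⟨S, -, hS⟩ := exists_mem_eq_inf' (f := fun S : {S // S ∈ univ.powersetCard k} =>
    S.1.sup' (card_pos.1 <| by rw [(mem_powersetCard.1 S.2).2]; omega) v) _
  exact ⟨S.1, (mem_powersetCard.1 S.2).2, fun i hi => (le_sup' v hi).trans_eq hS.symm⟩

theorem card_filter_lt_orderStat_lt (v : ι → ℝ) : #{i | v i < orderStat hk hkι v} < k := by
  by_contra! h
  obtain ⟨S, hS, hSk⟩ := exists_subset_card_eq h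
  have hSmem : S ∈ univ.powersetCard k := mem_powersetCard.2 ⟨subset_univ S, hSk⟩
  have hlt : S.sup' (card_pos.1 (by omega)) v < orderStat hk hkι v :=
    (sup'_lt_iff _).2 fun i hi => (mem_filter.1 (hS hi)).2
  exact hlt.not_ge (inf'_le _ (mem_attach _ ⟨S, hSmem⟩))

theorem le_card_filter_le_orderStat (v : ι → ℝ) : k ≤ #{i | v i ≤ orderStat hk hkι v} := by
  obtain ⟨S, hSk, hS⟩ := exists_card_eq_forall_le_orderStat hk hkι v
  exact hSk.ge.trans <| card_le_card fun i hi => mem_filter.2 ⟨mem_univ i, hS i hi⟩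

theorem le_orderStat_of_forall_le {v : ι → ℝ} {c : ℝ} (h : ∀ i, c ≤ v i) :
    c ≤ orderStat hk hkι v := by
  obtain ⟨S, hSk, hS⟩ := exists_card_eq_forall_le_orderStat hk hkι v
  obtain ⟨i, hi⟩ := card_pos.1 (hSk ▸ Nat.pos_of_ne_zero hk)
  exact (h i).trans (hS i hi)

theorem orderStat_le_of_forall_le {v : ι → ℝ} {c : ℝ} (h : ∀ i, v i ≤ c) :
    orderStat hk hkι v ≤ c := by
  by_contra! hc
  have := card_filter_lt_orderStat_lt hk hkι v
  rw [filter_true_of_mem fun i _ => (h i).trans_lt hc, card_univ] at this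
  omega

theorem orderStat_add_orderStat_neg_nonpos (h2k : 2 * k ≤ Fintype.card ι + 1) (v : ι → ℝ) :
    orderStat hk hkι v + orderStat hk hkι (-v) ≤ 0 := by
  by_contra! hpos
  -- every index then has `v i < orderStat v` or `-v i < orderStat (-v)`, each for fewer than `k`
  have hsplit := card_filter_add_card_filter_not (s := univ) (v · < orderStat hk hkι v)
  have hrest : #{i | ¬v i < orderStat hk hkι v} ≤ #{i | (-v) i < orderStat hk hkι (-v)} :=
    card_le_card <| monotone_filter_right _ fun i _ hi => by
      rw [Pi.neg_apply]; linarith [not_lt.1 hi]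
  have := card_filter_lt_orderStat_lt hk hkι v
  have := card_filter_lt_orderStat_lt hk hkι (-v)
  rw [card_univ] at hsplit
  omega

end OrderStat

section OddMedian

variable {ι : Type*} [Fintype ι] {k : ℕ} (hk : k ≠ 0) (hkι : k ≤ Fintype.card ι)

def oddMedian (v : ι → ℝ) : ℝ :=
  (orderStat hk hkι v - orderStat hk hkι (-v)) / 2

theorem oddMedian_neg (v : ι → ℝ) : oddMedian hk hkι (-v) = -oddMedian hk hkι v := by
  rw [oddMedian, oddMedian, neg_neg]; ring

theorem continuous_oddMedian : Continuous (oddMedian hk hkι) :=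
  ((continuous_orderStat hk hkι).sub ((continuous_orderStat hk hkι).comp continuous_neg)).div_const _

theorem le_oddMedian_of_forall_le {v : ι → ℝ} {c : ℝ} (h : ∀ i, c ≤ v i) :
    c ≤ oddMedian hk hkι v := by
  have h₁ := le_orderStat_of_forall_le hk hkι h
  have h₂ := orderStat_le_of_forall_le hk hkι (v := -v) (c := -c) fun i => neg_le_neg (h i)
  rw [oddMedian]; linarith

theorem oddMedian_le_of_forall_le {v : ι → ℝ} {c : ℝ} (h : ∀ i, v i ≤ c) :
    oddMedian hk hkι v ≤ c := by
  have := le_oddMedian_of_forall_le hk hkι (v := -v) (c := -c) fun i => neg_le_neg (h i)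
  rw [oddMedian_neg] at this; linarith

theorem le_card_filter_le_oddMedian (h2k : 2 * k ≤ Fintype.card ι + 1) (v : ι → ℝ) :
    k ≤ #{i | v i ≤ oddMedian hk hkι v} := by
  have hle : orderStat hk hkι v ≤ oddMedian hk hkι v := by
    have := orderStat_add_orderStat_neg_nonpos hk hkι h2k v
    rw [oddMedian]; linarith
  exact (le_card_filter_le_orderStat hk hkι v).trans
    (card_le_card <| monotone_filter_right _ fun _ _ hi => hi.trans hle)

end OddMedian

section CoverFun

variable {ι : Type*} [Fintype ι] [Nonempty ι] {k : ℕ} (hk : k ≠ 0) (hkι : k ≤ Fintype.card ι)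

def midrange (v : ι → ℝ) : ℝ :=
  (univ.sup' univ_nonempty v - univ.sup' univ_nonempty (-v)) / 2

theorem midrange_neg (v : ι → ℝ) : midrange (-v) = -midrange v := by
  rw [midrange, midrange, neg_neg]; ring

theorem continuous_midrange : Continuous (midrange (ι := ι)) := by
  unfold midrange; fun_prop

def coverFun (i₀ : ι) : Option ι → (ι → ℝ) → ℝ
  | some i, v => v i₀ + oddMedian hk hkι v - v i
  | none, v => midrange v - v i₀ - oddMedian hk hkι v

variable (i₀ : ι)

theorem coverFun_neg (j : Option ι) (v : ι → ℝ) :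
    coverFun hk hkι i₀ j (-v) = -coverFun hk hkι i₀ j v := by
  cases j <;> simp only [coverFun, oddMedian_neg, midrange_neg, Pi.neg_apply] <;> ring

theorem continuous_coverFun (j : Option ι) : Continuous (coverFun hk hkι i₀ j) := by
  have := continuous_oddMedian hk hkι
  cases j with
  | none => exact (continuous_midrange.sub (continuous_apply i₀)).sub this
  | some i => exact ((continuous_apply i₀).add this).sub (continuous_apply i)

theorem exists_coverFun_pos {v : ι → ℝ} (hv : v ≠ 0) : ∃ j, 0 < coverFun hk hkι i₀ j v := by
  by_contra! h
  obtain ⟨imax, -, hmax⟩ := exists_mem_eq_sup' univ_nonempty v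
  obtain ⟨imin, -, hmin⟩ := exists_mem_eq_sup' univ_nonempty (-v)
  have hle : ∀ i, v i ≤ v imax := fun i => hmax ▸ le_sup' v (mem_univ i)
  have hge : ∀ i, v imin ≤ v i := fun i =>
    neg_le_neg_iff.1 <| (le_sup' (-v) (mem_univ i)).trans_eq hmin
  have hlo := le_oddMedian_of_forall_le hk hkι hge
  have hhi := oddMedian_le_of_forall_le hk hkι hle
  have hsome := h (some imin)
  have hnone := h none
  rw [coverFun, midrange, hmax, hmin, Pi.neg_apply] at hnone
  rw [coverFun] at hsome
  refine hv (funext fun i => le_antisymm ?_ ?_)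
  · show v i ≤ 0
    linarith [hle i, hge i₀, hle i₀]
  · show 0 ≤ v i
    linarith [hge i, hge i₀, hle i₀]

theorem le_card_coverFun_pos (h2k : 2 * k ≤ Fintype.card ι + 1) {v : ι → ℝ} (hv : 0 < v i₀) :
    k ≤ Nat.card {j // 0 < coverFun hk hkι i₀ j v} := by
  calc k ≤ #{i | v i ≤ oddMedian hk hkι v} := le_card_filter_le_oddMedian hk hkι h2k v
    _ = Nat.card {i // v i ≤ oddMedian hk hkι v} := by
      rw [Nat.card_eq_fintype_card, Fintype.card_subtype]
    _ ≤ Nat.card {j // 0 < coverFun hk hkι i₀ j v} :=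
      Nat.card_le_card_of_injective (fun i => ⟨some i.1, by simp only [coverFun]; linarith [i.2]⟩)
        fun i i' h => Subtype.ext (Option.some_injective _ (congrArg Subtype.val h))

end CoverFun

section PosFamily

variable {d m : ℕ} (φ : Fin m → EuclideanSpace ℝ (Fin (d + 1)) → ℝ)

def posFamily : Fin m → Set (EuclideanSpace ℝ (Fin (d + 1))) :=
  fun j => {x | 0 < φ j x} ∩ sphereSet d

theorem isAntipodalFamily_posFamily (hφ : ∀ j x, φ j (-x) = -φ j x) :
    IsAntipodalFamily (posFamily φ) := by
  rintro j x ⟨hx, -⟩ ⟨hnx, -⟩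
  change 0 < φ j (-x) at hnx
  change 0 < φ j x at hx
  linarith [hφ j x]

theorem covCount_posFamily {x : EuclideanSpace ℝ (Fin (d + 1))} (hx : x ∈ sphereSet d) :
    covCount (posFamily φ) x = Nat.card {j // 0 < φ j x} := by
  simp [covCount, posFamily, hx]

theorem isNFoldCover_posFamily {n : ℕ} (hφ : ∀ j, Continuous (φ j))
    (hn : ∀ x ∈ sphereSet d, n ≤ Nat.card {j // 0 < φ j x}) : IsNFoldCover n (posFamily φ) :=
  ⟨fun _ => Set.inter_subset_right, fun j => ⟨_, isOpen_lt continuous_const (hφ j), rfl⟩,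
    fun x hx => covCount_posFamily φ hx ▸ hn x hx⟩

end PosFamily

theorem exists_antipodal_isNMFoldCover {d k : ℕ} (hk : k ≠ 0) (h2k : 2 * k ≤ d + 2) :
    ∃ F : Fin (d + 2) → Set (EuclideanSpace ℝ (Fin (d + 1))),
      IsNMFoldCover 1 k F ∧ IsAntipodalFamily F := by
  have hkι : k ≤ Fintype.card (Fin (d + 1)) := by rw [Fintype.card_fin]; omega
  let φ (j : Fin (d + 2)) (x : EuclideanSpace ℝ (Fin (d + 1))) : ℝ :=
    coverFun hk hkι (Fin.last d) (finSuccEquivLast j) x.ofLp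
  have hcount (x : EuclideanSpace ℝ (Fin (d + 1))) : Nat.card {j // 0 < φ j x} =
      Nat.card {j // 0 < coverFun hk hkι (Fin.last d) j x.ofLp} :=
    Nat.card_congr (finSuccEquivLast.subtypeEquiv fun _ => Iff.rfl)
  refine ⟨posFamily φ, ⟨isNFoldCover_posFamily φ
    (fun j => (continuous_coverFun hk hkι _ _).comp (PiLp.continuous_ofLp 2 _)) fun x hx => ?_,
    fun x hx => ?_⟩, isAntipodalFamily_posFamily φ fun j x => coverFun_neg hk hkι _ _ _⟩
  · obtain ⟨j, hj⟩ := exists_coverFun_pos hk hkι (Fin.last d)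
      fun h => ne_zero_of_mem_unit_sphere ⟨x, hx⟩ ((WithLp.ofLp_eq_zero 2).1 h)
    rw [hcount]
    exact Nat.card_pos_iff.2 ⟨⟨⟨j, hj⟩⟩, inferInstance⟩
  · rw [covCount_posFamily φ hx.1, hcount]
    exact le_card_coverFun_pos hk hkι _ (by rw [Fintype.card_fin]; omega) hx.2

theorem f1m_upper_bound_small_m_general (d : ℕ) :
    (∃ F : Fin (d + 2) → Set (EuclideanSpace ℝ (Fin (d + 1))),
        IsNMFoldCover 1 (d / 2 + 1) F ∧ IsAntipodalFamily F) ∧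
      ∀ m : ℕ, 1 < m → m ≤ d / 2 + 1 →
        ∃ F : Fin (d + 2) → Set (EuclideanSpace ℝ (Fin (d + 1))),
          IsNMFoldCover 1 m F ∧ IsAntipodalFamily F :=
  ⟨exists_antipodal_isNMFoldCover (by omega) (by omega),
    fun _ hm₁ hm => exists_antipodal_isNMFoldCover (by omega) (by omega)⟩

/-- Upper bound in Theorem 4 for `m ≤ ⌊d/2⌋ + 1`: there exists an antipodal
`(1, ⌊d/2⌋ + 1)`-fold cover of `S^d` with `d + 2` open sets; consequently for every
`m` with `1 < m ≤ ⌊d/2⌋ + 1` there is an antipodal `(1,m)`-fold cover with `d + 2`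
open sets. -/
theorem f1m_upper_bound_small_m (d : ℕ) (hd : 2 ≤ d) :
    (∃ F : Fin (d + 2) → Set (EuclideanSpace ℝ (Fin (d + 1))),
        IsNMFoldCover 1 (d / 2 + 1) F ∧ IsAntipodalFamily F) ∧
      ∀ m : ℕ, 1 < m → m ≤ d / 2 + 1 →
        ∃ F : Fin (d + 2) → Set (EuclideanSpace ℝ (Fin (d + 1))),
          IsNMFoldCover 1 m F ∧ IsAntipodalFamily F :=
  f1m_upper_bound_small_m_general d
end
end

section
/- Let d ≥ 2 and m ≥ ⌊d/2⌋ + 1. There exists an antipodal (1,m)-fold cover of S^d consisting of ⌊(d−1)/2⌋ + 2 + m open sets. (Upper bound in Theorem 4 for m ≥ ⌊d/2⌋ + 1.) -/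
noncomputable section

open scoped RealInnerProductSpace

namespace F1MAux

/-! ### Generic `Finset.sup'`/`inf'` negation lemmas -/

private lemma finset_sup'_neg {ι : Type*} {s : Finset ι} (hs : s.Nonempty) (f : ι → ℝ) :
    (s.sup' hs fun i => -f i) = -(s.inf' hs f) := by
  induction hs using Finset.Nonempty.cons_induction with
  | singleton a => simp
  | cons a s ha hs ih =>
      rw [Finset.sup'_cons hs, Finset.inf'_cons hs, ih]
      exact max_neg_neg _ _

private lemma finset_inf'_neg {ι : Type*} {s : Finset ι} (hs : s.Nonempty) (f : ι → ℝ) :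
    (s.inf' hs fun i => -f i) = -(s.sup' hs f) := by
  induction hs using Finset.Nonempty.cons_induction with
  | singleton a => simp
  | cons a s ha hs ih =>
      rw [Finset.inf'_cons hs, Finset.sup'_cons hs, ih]
      exact min_neg_neg _ _

/-! ### The construction -/

variable (d : ℕ)

/-- `d+1` odd linear functionals: the first `d` coordinates, and minus their sum. -/
private def gg (i : Fin (d + 1)) (x : EuclideanSpace ℝ (Fin (d + 1))) : ℝ :=
  if (i : ℕ) < d then x i else -∑ j : Fin d, x (Fin.castSucc j)

private lemma gg_neg (i : Fin (d + 1)) (x : EuclideanSpace ℝ (Fin (d + 1))) :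
    gg d i (-x) = -(gg d i x) := by
  unfold gg
  split_ifs with h
  · rfl
  · have hco : ∀ j : Fin d, (-x) (Fin.castSucc j) = -(x (Fin.castSucc j)) := fun j => rfl
    rw [Finset.sum_congr rfl fun j _ => hco j, Finset.sum_neg_distrib, neg_neg]

private lemma continuous_coord (i : Fin (d + 1)) :
    Continuous fun x : EuclideanSpace ℝ (Fin (d + 1)) => x i :=
  (EuclideanSpace.proj i).continuous

private lemma continuous_gg (i : Fin (d + 1)) : Continuous (gg d i) := by
  unfold gg
  split_ifs with h
  · exact continuous_coord d i
  · exact (continuous_finset_sum _ fun j _ => continuous_coord d (Fin.castSucc j)).neg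

/-- collection of all subsets of indices of size `d/2 + 1`. -/
private def CC : Finset (Finset (Fin (d + 1))) :=
  (Finset.univ : Finset (Fin (d + 1))).powersetCard (d / 2 + 1)

private lemma CC_nonempty : (CC d).Nonempty := by
  apply Finset.powersetCard_nonempty.mpr
  rw [Finset.card_univ, Fintype.card_fin]
  omega

private lemma mem_CC_card {T : Finset (Fin (d + 1))} (hT : T ∈ CC d) : T.card = d / 2 + 1 :=
  (Finset.mem_powersetCard.mp hT).2

private lemma mem_CC_nonempty {T : Finset (Fin (d + 1))} (hT : T ∈ CC d) : T.Nonempty := by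
  apply Finset.card_pos.mp
  rw [mem_CC_card d hT]
  omega

private lemma CC_attach_nonempty : (CC d).attach.Nonempty :=
  Finset.attach_nonempty_iff.mpr (CC_nonempty d)

/-- `(d/2+1)`-th smallest of the `gg` values. -/
private def lo (x : EuclideanSpace ℝ (Fin (d + 1))) : ℝ :=
  (CC d).attach.inf' (CC_attach_nonempty d) fun T =>
    T.1.sup' (mem_CC_nonempty d T.2) fun i => gg d i x

/-- `(d/2+1)`-th largest of the `gg` values. -/
private def hi (x : EuclideanSpace ℝ (Fin (d + 1))) : ℝ :=
  (CC d).attach.sup' (CC_attach_nonempty d) fun T =>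
    T.1.inf' (mem_CC_nonempty d T.2) fun i => gg d i x

private def QQ (x : EuclideanSpace ℝ (Fin (d + 1))) : ℝ := (lo d x + hi d x) / 2

private lemma univ_ne : (Finset.univ : Finset (Fin (d + 1))).Nonempty :=
  Finset.univ_nonempty

private def sg (x : EuclideanSpace ℝ (Fin (d + 1))) : ℝ :=
  Finset.univ.sup' (univ_ne d) fun i => gg d i x

private def ig (x : EuclideanSpace ℝ (Fin (d + 1))) : ℝ :=
  Finset.univ.inf' (univ_ne d) fun i => gg d i x

private def PP (x : EuclideanSpace ℝ (Fin (d + 1))) : ℝ :=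
  sg d x + ig d x - 2 * QQ d x

private lemma lo_le_hi (x : EuclideanSpace ℝ (Fin (d + 1))) : lo d x ≤ hi d x := by
  classical
  set W := Finset.univ.filter (fun i => gg d i x < lo d x) with hWdef
  have hWcard : W.card < d / 2 + 1 := by
    by_contra hge
    push_neg at hge
    obtain ⟨T, hTW, hTcard⟩ := Finset.exists_subset_card_eq hge
    have hTC : T ∈ CC d := Finset.mem_powersetCard.mpr ⟨Finset.subset_univ _, hTcard⟩
    have h1 : lo d x ≤ T.sup' (mem_CC_nonempty d hTC) fun i => gg d i x :=
      Finset.inf'_le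
        (fun T : {T // T ∈ CC d} => T.1.sup' (mem_CC_nonempty d T.2) fun i => gg d i x)
        (Finset.mem_attach (CC d) ⟨T, hTC⟩)
    have h2 : (T.sup' (mem_CC_nonempty d hTC) fun i => gg d i x) < lo d x := by
      rw [Finset.sup'_lt_iff]
      intro i hiT
      exact (Finset.mem_filter.mp (hTW hiT)).2
    linarith
  have hcompl : d / 2 + 1 ≤ (Finset.univ \ W).card := by
    rw [Finset.card_sdiff_of_subset (Finset.subset_univ W), Finset.card_univ, Fintype.card_fin]
    omega
  obtain ⟨T₂, hT₂sub, hT₂card⟩ := Finset.exists_subset_card_eq hcompl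
  have hT₂C : T₂ ∈ CC d := Finset.mem_powersetCard.mpr ⟨Finset.subset_univ _, hT₂card⟩
  have h3 : (T₂.inf' (mem_CC_nonempty d hT₂C) fun i => gg d i x) ≤ hi d x :=
    Finset.le_sup'
      (fun T : {T // T ∈ CC d} => T.1.inf' (mem_CC_nonempty d T.2) fun i => gg d i x)
      (Finset.mem_attach (CC d) ⟨T₂, hT₂C⟩)
  have h4 : lo d x ≤ T₂.inf' (mem_CC_nonempty d hT₂C) fun i => gg d i x := by
    apply Finset.le_inf'
    intro i hiT₂
    have hmem := hT₂sub hiT₂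
    rw [Finset.mem_sdiff] at hmem
    by_contra hlt
    push_neg at hlt
    exact hmem.2 (Finset.mem_filter.mpr ⟨Finset.mem_univ _, hlt⟩)
  linarith

private lemma lo_le_QQ (x : EuclideanSpace ℝ (Fin (d + 1))) : lo d x ≤ QQ d x := by
  have := lo_le_hi d x
  unfold QQ
  linarith

private lemma QQ_le_hi (x : EuclideanSpace ℝ (Fin (d + 1))) : QQ d x ≤ hi d x := by
  have := lo_le_hi d x
  unfold QQ
  linarith

/-- there is a set of `d/2+1` indices whose `gg` values are all `≤ QQ`. -/
private lemma exists_low_set (x : EuclideanSpace ℝ (Fin (d + 1))) :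
    ∃ T : Finset (Fin (d + 1)), T.card = d / 2 + 1 ∧ ∀ i ∈ T, gg d i x ≤ QQ d x := by
  obtain ⟨T, _, hTeq⟩ := Finset.exists_mem_eq_inf' (CC_attach_nonempty d)
    (fun T : {T // T ∈ CC d} => T.1.sup' (mem_CC_nonempty d T.2) fun i => gg d i x)
  refine ⟨T.1, mem_CC_card d T.2, fun i hiT => ?_⟩
  have h1 : gg d i x ≤ T.1.sup' (mem_CC_nonempty d T.2) fun i => gg d i x :=
    Finset.le_sup' (fun i => gg d i x) hiT
  have h2 : lo d x = T.1.sup' (mem_CC_nonempty d T.2) fun i => gg d i x := hTeq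
  have h3 := lo_le_QQ d x
  linarith

private lemma exists_ge_QQ (x : EuclideanSpace ℝ (Fin (d + 1))) :
    ∃ i : Fin (d + 1), QQ d x ≤ gg d i x := by
  obtain ⟨T, _, hTeq⟩ := Finset.exists_mem_eq_sup' (CC_attach_nonempty d)
    (fun T : {T // T ∈ CC d} => T.1.inf' (mem_CC_nonempty d T.2) fun i => gg d i x)
  obtain ⟨i, hiT⟩ := mem_CC_nonempty d T.2
  refine ⟨i, ?_⟩
  have h1 : (T.1.inf' (mem_CC_nonempty d T.2) fun i => gg d i x) ≤ gg d i x :=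
    Finset.inf'_le (fun i => gg d i x) hiT
  have h2 : hi d x = T.1.inf' (mem_CC_nonempty d T.2) fun i => gg d i x := hTeq
  have h3 := QQ_le_hi d x
  linarith

private lemma QQ_le_sg (x : EuclideanSpace ℝ (Fin (d + 1))) : QQ d x ≤ sg d x := by
  obtain ⟨i, hig⟩ := exists_ge_QQ d x
  exact le_trans hig (Finset.le_sup' (fun i => gg d i x) (Finset.mem_univ i))

/-! ### Oddness -/

private lemma lo_neg (x : EuclideanSpace ℝ (Fin (d + 1))) : lo d (-x) = -(hi d x) := by
  unfold lo hi
  have h1 : ∀ T : {T // T ∈ CC d},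
      (T.1.sup' (mem_CC_nonempty d T.2) fun i => gg d i (-x))
        = -(T.1.inf' (mem_CC_nonempty d T.2) fun i => gg d i x) := by
    intro T
    rw [Finset.sup'_congr (mem_CC_nonempty d T.2) rfl fun i _ => gg_neg d i x]
    exact finset_sup'_neg _ _
  rw [Finset.inf'_congr (CC_attach_nonempty d) rfl fun T _ => h1 T]
  exact finset_inf'_neg _ _

private lemma hi_neg (x : EuclideanSpace ℝ (Fin (d + 1))) : hi d (-x) = -(lo d x) := by
  unfold lo hi
  have h1 : ∀ T : {T // T ∈ CC d},
      (T.1.inf' (mem_CC_nonempty d T.2) fun i => gg d i (-x))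
        = -(T.1.sup' (mem_CC_nonempty d T.2) fun i => gg d i x) := by
    intro T
    rw [Finset.inf'_congr (mem_CC_nonempty d T.2) rfl fun i _ => gg_neg d i x]
    exact finset_inf'_neg _ _
  rw [Finset.sup'_congr (CC_attach_nonempty d) rfl fun T _ => h1 T]
  exact finset_sup'_neg _ _

private lemma QQ_neg (x : EuclideanSpace ℝ (Fin (d + 1))) : QQ d (-x) = -(QQ d x) := by
  unfold QQ
  rw [lo_neg, hi_neg]
  ring

private lemma sg_neg (x : EuclideanSpace ℝ (Fin (d + 1))) : sg d (-x) = -(ig d x) := by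
  unfold sg ig
  rw [Finset.sup'_congr (univ_ne d) rfl fun i _ => gg_neg d i x]
  exact finset_sup'_neg _ _

private lemma ig_neg (x : EuclideanSpace ℝ (Fin (d + 1))) : ig d (-x) = -(sg d x) := by
  unfold sg ig
  rw [Finset.inf'_congr (univ_ne d) rfl fun i _ => gg_neg d i x]
  exact finset_inf'_neg _ _

private lemma PP_neg (x : EuclideanSpace ℝ (Fin (d + 1))) : PP d (-x) = -(PP d x) := by
  unfold PP
  rw [sg_neg, ig_neg, QQ_neg]
  ring

/-! ### Continuity -/

private lemma continuous_lo : Continuous (lo d) :=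
  Continuous.finset_inf'_apply (CC_attach_nonempty d) fun T _ =>
    Continuous.finset_sup'_apply (mem_CC_nonempty d T.2) fun i _ => continuous_gg d i

private lemma continuous_hi : Continuous (hi d) :=
  Continuous.finset_sup'_apply (CC_attach_nonempty d) fun T _ =>
    Continuous.finset_inf'_apply (mem_CC_nonempty d T.2) fun i _ => continuous_gg d i

private lemma continuous_QQ : Continuous (QQ d) := by
  unfold QQ
  exact ((continuous_lo d).add (continuous_hi d)).div_const 2

private lemma continuous_PP : Continuous (PP d) := by
  unfold PP
  exact ((Continuous.finset_sup'_apply (univ_ne d) fun i _ => continuous_gg d i).add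
    (Continuous.finset_inf'_apply (univ_ne d) fun i _ => continuous_gg d i)).sub
    (continuous_const.mul (continuous_QQ d))

/-! ### The family of functions -/

variable (m : ℕ)

private def qq (i : Fin ((d - 1) / 2 + 2 + m)) (x : EuclideanSpace ℝ (Fin (d + 1))) : ℝ :=
  if h : (i : ℕ) < d + 1 then gg d ⟨(i : ℕ), h⟩ x - QQ d x - x (Fin.last d)
  else if (i : ℕ) = d + 1 then x (Fin.last d) - PP d x / 2
  else -(x (Fin.last d))

private lemma qq_neg (i : Fin ((d - 1) / 2 + 2 + m)) (x : EuclideanSpace ℝ (Fin (d + 1))) :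
    qq d m i (-x) = -(qq d m i x) := by
  have hlast : (-x) (Fin.last d) = -(x (Fin.last d)) := rfl
  unfold qq
  split_ifs with h1 h2
  · rw [gg_neg, QQ_neg, hlast]; ring
  · rw [PP_neg, hlast]; ring
  · rw [hlast]

private lemma continuous_qq (i : Fin ((d - 1) / 2 + 2 + m)) : Continuous (qq d m i) := by
  unfold qq
  split_ifs with h1 h2
  · exact ((continuous_gg d _).sub (continuous_QQ d)).sub (continuous_coord d _)
  · exact (continuous_coord d _).sub ((continuous_PP d).div_const 2)
  · exact (continuous_coord d _).neg

/-- the family of sets. -/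
private def Ffam (i : Fin ((d - 1) / 2 + 2 + m)) : Set (EuclideanSpace ℝ (Fin (d + 1))) :=
  {y | qq d m i y < 0} ∩ sphereSet d

private lemma le_covCount {k : ℕ} (F : Fin k → Set (EuclideanSpace ℝ (Fin (d + 1))))
    (x : EuclideanSpace ℝ (Fin (d + 1))) (S : Finset (Fin k)) (hS : ∀ i ∈ S, x ∈ F i) :
    S.card ≤ covCount F x := by
  classical
  have hcc : covCount F x = (Finset.univ.filter fun i => x ∈ F i).card := by
    rw [covCount, Nat.card_eq_fintype_card, Fintype.card_subtype]
  rw [hcc]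
  exact Finset.card_le_card fun i hiS => Finset.mem_filter.mpr ⟨Finset.mem_univ _, hS i hiS⟩

/-! ### Coverage -/

private lemma cover_north (hd : 2 ≤ d) (hm : d / 2 + 1 ≤ m)
    (x : EuclideanSpace ℝ (Fin (d + 1))) (hx : x ∈ sphereSet d)
    (ht : 0 < x (Fin.last d)) : m ≤ covCount (Ffam d m) x := by
  classical
  obtain ⟨T, hTcard, hTle⟩ := exists_low_set d x
  have hK : d + 2 ≤ (d - 1) / 2 + 2 + m := by omega
  let e1 : Fin (d + 1) ↪ Fin ((d - 1) / 2 + 2 + m) :=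
    ⟨fun j => ⟨(j : ℕ), by omega⟩, fun a b hab => by
      have hv := congrArg Fin.val hab
      exact Fin.ext hv⟩
  let e2 : Fin (m - (d / 2 + 1)) ↪ Fin ((d - 1) / 2 + 2 + m) :=
    ⟨fun j => ⟨d + 2 + (j : ℕ), by omega⟩, fun a b hab => by
      have hv := congrArg Fin.val hab
      have hv' : d + 2 + (a : ℕ) = d + 2 + (b : ℕ) := hv
      exact Fin.ext (by omega)⟩
  have hdisj : Disjoint (T.map e1) ((Finset.univ : Finset (Fin (m - (d / 2 + 1)))).map e2) := by
    rw [Finset.disjoint_left]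
    rintro a ha1 ha2
    obtain ⟨j1, _, rfl⟩ := Finset.mem_map.mp ha1
    obtain ⟨j2, _, hj2⟩ := Finset.mem_map.mp ha2
    have hv := congrArg Fin.val hj2
    have hv' : d + 2 + (j2 : ℕ) = (j1 : ℕ) := hv
    have := j1.isLt
    omega
  have hcard : ((T.map e1) ∪ ((Finset.univ : Finset (Fin (m - (d / 2 + 1)))).map e2)).card = m := by
    rw [Finset.card_union_of_disjoint hdisj, Finset.card_map, Finset.card_map, hTcard,
      Finset.card_univ, Fintype.card_fin]
    omega
  have hmem : ∀ i ∈ (T.map e1) ∪ ((Finset.univ : Finset (Fin (m - (d / 2 + 1)))).map e2),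
      x ∈ Ffam d m i := by
    intro i hiS
    rcases Finset.mem_union.mp hiS with h1 | h2
    · obtain ⟨j, hjT, rfl⟩ := Finset.mem_map.mp h1
      refine ⟨?_, hx⟩
      show qq d m (e1 j) x < 0
      have hlt : ((e1 j : Fin ((d - 1) / 2 + 2 + m)) : ℕ) < d + 1 := j.isLt
      unfold qq
      rw [dif_pos hlt]
      show gg d j x - QQ d x - x (Fin.last d) < 0
      have h3 := hTle j hjT
      linarith
    · obtain ⟨j, _, rfl⟩ := Finset.mem_map.mp h2
      refine ⟨?_, hx⟩
      show qq d m (e2 j) x < 0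
      have h4 : ¬ (((e2 j : Fin ((d - 1) / 2 + 2 + m)) : ℕ) < d + 1) := by
        show ¬ (d + 2 + (j : ℕ) < d + 1)
        omega
      have h5 : ¬ (((e2 j : Fin ((d - 1) / 2 + 2 + m)) : ℕ) = d + 1) := by
        show ¬ (d + 2 + (j : ℕ) = d + 1)
        omega
      unfold qq
      rw [dif_neg h4, if_neg h5]
      linarith
  have hfin := le_covCount d (Ffam d m) x _ hmem
  rwa [hcard] at hfin

private lemma cover_south (hd : 2 ≤ d) (hm : d / 2 + 1 ≤ m)
    (x : EuclideanSpace ℝ (Fin (d + 1))) (hx : x ∈ sphereSet d)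
    (ht : x (Fin.last d) ≤ 0) : 1 ≤ covCount (Ffam d m) x := by
  classical
  have hK : d + 2 ≤ (d - 1) / 2 + 2 + m := by omega
  have single : ∀ i : Fin ((d - 1) / 2 + 2 + m), qq d m i x < 0 →
      1 ≤ covCount (Ffam d m) x := by
    intro i hqi
    have h := le_covCount d (Ffam d m) x {i} (by
      intro j hj
      rw [Finset.mem_singleton] at hj
      subst hj
      exact ⟨hqi, hx⟩)
    simpa using h
  rcases lt_or_eq_of_le ht with htlt | hteq
  · -- strictly southern hemisphere
    by_cases hP : 2 * x (Fin.last d) < PP d x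
    · refine single ⟨d + 1, by omega⟩ ?_
      unfold qq
      rw [dif_neg (by omega : ¬ ((d + 1 : ℕ) < d + 1)), if_pos rfl]
      linarith
    · push_neg at hP
      obtain ⟨i₀, _, hi₀eq⟩ := Finset.exists_mem_eq_inf' (univ_ne d) (fun i => gg d i x)
      have hsg := QQ_le_sg d x
      have hlt0 : (i₀ : ℕ) < d + 1 := i₀.isLt
      refine single ⟨(i₀ : ℕ), by omega⟩ ?_
      unfold qq
      rw [dif_pos hlt0]
      show gg d i₀ x - QQ d x - x (Fin.last d) < 0
      have higv : ig d x = gg d i₀ x := hi₀eq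
      unfold PP at hP
      linarith
  · -- the equator
    by_cases hA : ∃ i, gg d i x < QQ d x
    · obtain ⟨i₁, hi₁⟩ := hA
      have hlt1 : (i₁ : ℕ) < d + 1 := i₁.isLt
      refine single ⟨(i₁ : ℕ), by omega⟩ ?_
      unfold qq
      rw [dif_pos hlt1]
      show gg d i₁ x - QQ d x - x (Fin.last d) < 0
      rw [← hteq]
      linarith
    · push_neg at hA
      -- every value is ≥ QQ; show some value is strictly above QQ
      have hstrict : ∃ i, QQ d x < gg d i x := by
        by_contra hno
        push_neg at hno
        have hall : ∀ i, gg d i x = QQ d x := fun i => le_antisymm (hno i) (hA i)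
        have hlastg := hall (Fin.last d)
        have hlast_not : ¬ ((Fin.last d : ℕ) < d) := by
          simp [Fin.val_last]
        unfold gg at hlastg
        rw [if_neg hlast_not] at hlastg
        have hcoords : ∀ j : Fin d, x (Fin.castSucc j) = QQ d x := by
          intro j
          have hj := hall (Fin.castSucc j)
          unfold gg at hj
          rwa [if_pos (by simp [Fin.coe_castSucc] : ((Fin.castSucc j : Fin (d+1)) : ℕ) < d)] at hj
        rw [Finset.sum_congr rfl fun j _ => hcoords j, Finset.sum_const, Finset.card_univ,
          Fintype.card_fin, nsmul_eq_mul] at hlastg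
        have hQ0 : QQ d x = 0 := by
          have h2 : ((d : ℝ) + 1) * QQ d x = 0 := by linarith
          rcases mul_eq_zero.mp h2 with h | h
          · have : (0 : ℝ) < (d : ℝ) + 1 := by positivity
            linarith
          · exact h
        have hx0 : ∀ i : Fin (d + 1), x i = 0 := by
          intro i
          rcases Nat.lt_or_ge (i : ℕ) d with hlt | hge
          · have hi := hall i
            unfold gg at hi
            rw [if_pos hlt] at hi
            rw [hi, hQ0]
          · have hieq : i = Fin.last d := by
              apply Fin.ext
              have := i.isLt
              simp only [Fin.val_last]
              omega
            rw [hieq, ← hteq]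
        have hnx : ‖x‖ = 1 := mem_sphere_zero_iff_norm.mp hx
        rw [EuclideanSpace.norm_eq] at hnx
        simp [hx0] at hnx
      obtain ⟨i₁, hi₁⟩ := hstrict
      refine single ⟨d + 1, by omega⟩ ?_
      unfold qq
      rw [dif_neg (by omega : ¬ ((d + 1 : ℕ) < d + 1)), if_pos rfl]
      have hig : QQ d x ≤ ig d x := Finset.le_inf' _ _ fun i _ => hA i
      have hsg : QQ d x < sg d x :=
        lt_of_lt_of_le hi₁ (Finset.le_sup' (fun i => gg d i x) (Finset.mem_univ i₁))
      unfold PP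
      rw [← hteq]
      linarith

end F1MAux

/-- Upper bound in Theorem 4 for `m ≥ ⌊d/2⌋ + 1`: there exists an antipodal
`(1,m)`-fold cover of `S^d` with `⌊(d-1)/2⌋ + 2 + m` open sets. -/
theorem f1m_upper_bound_large_m (d m : ℕ) (hd : 2 ≤ d) (hm : d / 2 + 1 ≤ m) :
    ∃ F : Fin ((d - 1) / 2 + 2 + m) → Set (EuclideanSpace ℝ (Fin (d + 1))),
      IsNMFoldCover 1 m F ∧ IsAntipodalFamily F := by
  classical
  refine ⟨F1MAux.Ffam d m, ⟨⟨fun i => Set.inter_subset_right,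
    fun i => ⟨{y | F1MAux.qq d m i y < 0},
      isOpen_lt (F1MAux.continuous_qq d m i) continuous_const, rfl⟩, fun x hx => ?_⟩,
    fun x hx => ?_⟩, fun i x hxm hxn => ?_⟩
  · -- 1-fold cover
    rcases le_or_gt (x (Fin.last d)) 0 with h | h
    · exact F1MAux.cover_south d m hd hm x hx h
    · exact le_trans (by omega) (F1MAux.cover_north d m hd hm x hx h)
  · -- m-fold on the open northern hemisphere
    obtain ⟨hxs, hxt⟩ := hx
    exact F1MAux.cover_north d m hd hm x hxs hxt
  · -- antipodality
    obtain ⟨hq, _⟩ := hxm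
    obtain ⟨hq', _⟩ := hxn
    have hq2 : F1MAux.qq d m i x < 0 := hq
    have hq3 : F1MAux.qq d m i (-x) < 0 := hq'
    rw [F1MAux.qq_neg] at hq3
    linarith
end
end

section
/- Let m > 1. Every antipodal (1,m)-fold cover of the circle S^1 by k open sets satisfies k ≥ m + 2. (Lower bound of Proposition 5: f(1,1,m) ≥ 2 + m.) -/
/-!
If `k ≤ m + 1`, every point of the open lower semicircle is covered exactly once, because its
antipode is covered at least `m` times and no set contains both. By connectedness one set `F i₀`
then contains the whole lower semicircle, and every upper point, missing `F i₀`, lies in all the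
other sets. So every set contains an open semicircle, and being open and antipodal it cannot
contain an endpoint of that semicircle: near such a point it would meet the opposite one. Hence
the point `(1, 0)` is not covered at all.
-/

noncomputable section

open scoped RealInnerProductSpace

open Set Filter Topology

section Counting

variable {d k : ℕ} {F : Fin k → Set (EuclideanSpace ℝ (Fin (d + 1)))}
  {x : EuclideanSpace ℝ (Fin (d + 1))}

lemma covCount_add_covCount_neg_le (hF : IsAntipodalFamily F)
    (x : EuclideanSpace ℝ (Fin (d + 1))) : covCount F x + covCount F (-x) ≤ k := by
  rw [covCount, covCount, ← Nat.card_sum]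
  calc Nat.card _ ≤ Nat.card (Fin k) :=
        Nat.card_le_card_of_injective (Sum.elim Subtype.val Subtype.val)
          (Subtype.val_injective.sumElim Subtype.val_injective
            fun a b hab => hF a x a.2 (hab ▸ b.2))
    _ = k := Nat.card_eq_fintype_card.trans (Fintype.card_fin k)

lemma exists_mem_of_covCount_pos (h : 0 < covCount F x) : ∃ i, x ∈ F i := by
  obtain ⟨⟨i, hi⟩⟩ := (Nat.card_pos_iff.1 h).1
  exact ⟨i, hi⟩

lemma eq_of_covCount_le_one (h : covCount F x ≤ 1) {i j : Fin k} (hi : x ∈ F i) (hj : x ∈ F j) :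
    i = j :=
  congrArg Subtype.val ((Finite.card_le_one_iff_subsingleton.1 h).elim ⟨i, hi⟩ ⟨j, hj⟩)

lemma covCount_add_two_le {i j : Fin k} (hij : i ≠ j) (hi : x ∉ F i) (hj : x ∉ F j) :
    covCount F x + 2 ≤ k := by
  classical
  have hdisj : Disjoint (Finset.univ.filter (x ∈ F ·)) ({i, j} : Finset (Fin k)) := by
    simp only [Finset.disjoint_left, Finset.mem_filter, Finset.mem_univ, true_and,
      Finset.mem_insert, Finset.mem_singleton]
    rintro l hl (rfl | rfl) <;> contradiction
  calc covCount F x + 2 = (Finset.univ.filter (x ∈ F ·) ∪ {i, j}).card := by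
        rw [Finset.card_union_of_disjoint hdisj, Finset.card_pair hij, covCount,
          Nat.card_eq_fintype_card, Fintype.card_subtype]
    _ ≤ k := (Finset.card_le_univ _).trans_eq (Fintype.card_fin k)

end Counting

theorem IsPreconnected.subset_of_existsUnique {α ι : Type*} [TopologicalSpace α] {s : Set α}
    (hs : IsPreconnected s) {U : ι → Set α} (hU : ∀ i, IsOpen (U i))
    (h : ∀ x ∈ s, ∃! i, x ∈ U i) {x : α} (hx : x ∈ s) {i : ι} (hxi : x ∈ U i) : s ⊆ U i := by
  have hcover : s ⊆ U i ∪ ⋃ j ≠ i, U j := fun y hy => by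
    obtain ⟨j, hj, -⟩ := h y hy
    by_cases hji : j = i
    · exact Or.inl (hji ▸ hj)
    · exact Or.inr (mem_iUnion₂.2 ⟨j, hji, hj⟩)
  have hdisj : s ∩ (U i ∩ ⋃ j ≠ i, U j) = ∅ := by
    refine eq_empty_of_forall_notMem fun y ⟨hy, hyi, hyj⟩ => ?_
    obtain ⟨j, hji, hyj⟩ := mem_iUnion₂.1 hyj
    exact hji ((h y hy).unique hyj hyi)
  refine (isPreconnected_iff_subset_of_disjoint.1 hs _ _ (hU i) (isOpen_biUnion fun j _ => hU j)
    hcover hdisj).resolve_right fun hsub => ?_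
  obtain ⟨j, hji, hxj⟩ := mem_iUnion₂.1 (hsub hx)
  exact hji ((h x hx).unique hxj hxi)

section Sphere

variable {d : ℕ}

lemma neg_mem_sphereSet_iff {x : EuclideanSpace ℝ (Fin (d + 1))} :
    -x ∈ sphereSet d ↔ x ∈ sphereSet d := by
  simp [sphereSet]

lemma openNorth_subset_sphereSet : openNorth d ⊆ sphereSet d := sep_subset _ _

lemma neg_openNorth_subset_sphereSet : -openNorth d ⊆ sphereSet d := fun _ hx =>
  neg_mem_sphereSet_iff.1 (openNorth_subset_sphereSet hx)

lemma single_last_mem_openNorth : EuclideanSpace.single (Fin.last d) 1 ∈ openNorth d := by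
  simp [openNorth, sphereSet]

lemma continuousAt_inv_norm_smul {x : EuclideanSpace ℝ (Fin (d + 1))} (hx : x ≠ 0) :
    ContinuousAt (fun y : EuclideanSpace ℝ (Fin (d + 1)) => ‖y‖⁻¹ • y) x :=
  (continuous_norm.continuousAt.inv₀ (norm_ne_zero_iff.2 hx)).smul continuousAt_id

lemma openNorth_eq_image :
    openNorth d = (fun x => ‖x‖⁻¹ • x) '' {x | 0 < x (Fin.last d)} := by
  ext x
  constructor
  · rintro ⟨hx, hx₀⟩
    refine ⟨x, hx₀, ?_⟩
    simp_all [sphereSet]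
  · rintro ⟨y, hy, rfl⟩
    have hy₀ : y ≠ 0 := by rintro rfl; simp at hy
    refine ⟨by simp [sphereSet, norm_smul, hy₀], ?_⟩
    simp only [PiLp.smul_apply, smul_eq_mul]
    exact mul_pos (inv_pos.2 (norm_pos_iff.2 hy₀)) hy

lemma isPreconnected_openNorth : IsPreconnected (openNorth d) := by
  rw [openNorth_eq_image]
  refine ((convex_Ioi 0).linear_preimage (EuclideanSpace.proj (Fin.last d) :
    EuclideanSpace ℝ (Fin (d + 1)) →L[ℝ] ℝ).toLinearMap).isPreconnected.image _ fun x hx => ?_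
  refine (continuousAt_inv_norm_smul ?_).continuousWithinAt
  rintro rfl
  simp at hx

lemma mem_closure_openNorth {p : EuclideanSpace ℝ (Fin (d + 1))} (hp : p ∈ sphereSet d)
    (hp₀ : p (Fin.last d) = 0) : p ∈ closure (openNorth d) := by
  have hnorm : ‖p‖ = 1 := mem_sphere_zero_iff_norm.1 hp
  have hpath : p ∈ closure {x : EuclideanSpace ℝ (Fin (d + 1)) | 0 < x (Fin.last d)} := by
    refine mem_closure_of_tendsto (f := fun t : ℝ => p + t • EuclideanSpace.single (Fin.last d) 1)
      (b := 𝓝[>] 0) ?_ ?_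
    · exact (Continuous.tendsto' (by fun_prop) 0 p (by simp)).mono_left nhdsWithin_le_nhds
    · filter_upwards [self_mem_nhdsWithin] with t ht
      simpa [hp₀] using ht
  have hcont := continuousAt_inv_norm_smul (norm_ne_zero_iff.1 (hnorm.trans_ne one_ne_zero))
  simpa [openNorth_eq_image, hnorm] using hcont.continuousWithinAt.mem_closure_image hpath

lemma mem_closure_neg_openNorth {p : EuclideanSpace ℝ (Fin (d + 1))} (hp : p ∈ sphereSet d)
    (hp₀ : p (Fin.last d) = 0) : p ∈ closure (-openNorth d) := by
  rw [← neg_closure, Set.mem_neg]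
  exact mem_closure_openNorth (neg_mem_sphereSet_iff.2 hp) (by simp [hp₀])

lemma IsOpenInSphere.disjoint_closure_of_neg_subset {A s : Set (EuclideanSpace ℝ (Fin (d + 1)))}
    (hA : IsOpenInSphere d A) (hanti : ∀ x ∈ A, -x ∉ A) (hs : s ⊆ sphereSet d) (hsA : -s ⊆ A) :
    Disjoint A (closure s) := by
  obtain ⟨U, hU, rfl⟩ := hA
  have hUs : Disjoint U s := Set.disjoint_left.2 fun x hxU hxs =>
    hanti x ⟨hxU, hs hxs⟩ (hsA (by simpa using hxs))
  exact (hUs.closure_right hU).mono_left inter_subset_left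

end Sphere

lemma exists_neg_openNorth_subset_of_card_le {d k m : ℕ}
    {F : Fin k → Set (EuclideanSpace ℝ (Fin (d + 1)))} (hcov : IsNMFoldCover 1 m F)
    (hanti : IsAntipodalFamily F) (hk : k ≤ m + 1) :
    ∃ i₀, -openNorth d ⊆ F i₀ ∧ ∀ i ≠ i₀, openNorth d ⊆ F i := by
  obtain ⟨⟨-, hopen, hone⟩, hm⟩ := hcov
  choose U hU hFU using hopen
  have hcount : ∀ x ∈ openNorth d, covCount F (-x) ≤ 1 ∧ k ≤ covCount F x + 1 := fun x hx => by
    have := covCount_add_covCount_neg_le hanti x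
    have := hm x hx
    have := hone (-x) (neg_mem_sphereSet_iff.2 hx.1)
    omega
  have hmemU : ∀ x ∈ -openNorth d, ∀ i, x ∈ U i ↔ x ∈ F i := fun x hx i => by
    simp [hFU, neg_openNorth_subset_sphereSet hx]
  have hunique : ∀ x ∈ -openNorth d, ∃! i, x ∈ U i := fun x hx => by
    obtain ⟨i, hi⟩ := exists_mem_of_covCount_pos (hone x (neg_openNorth_subset_sphereSet hx))
    refine ⟨i, (hmemU x hx i).2 hi, fun j hj => eq_of_covCount_le_one ?_ ((hmemU x hx j).1 hj) hi⟩
    simpa using (hcount (-x) hx).1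
  have hpole : -EuclideanSpace.single (Fin.last d) 1 ∈ -openNorth d := by
    simpa using single_last_mem_openNorth
  obtain ⟨i₀, hi₀, -⟩ := hunique _ hpole
  have hconn : IsPreconnected (-openNorth d) := by
    simpa only [Set.image_neg_eq_neg] using
      isPreconnected_openNorth.image _ continuous_neg.continuousOn
  have hsouth : -openNorth d ⊆ F i₀ := fun x hx =>
    (hmemU x hx i₀).1 (hconn.subset_of_existsUnique hU hunique hpole hi₀ hx)
  refine ⟨i₀, hsouth, fun i hi x hx => ?_⟩
  by_contra hxi
  have hx₀ : x ∉ F i₀ := fun h => hanti i₀ x h (hsouth (by simpa using hx))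
  have := covCount_add_two_le hi hxi hx₀
  have := (hcount x hx).2
  omega

theorem f_circle_lower_bound_general (m k : ℕ)
    (F : Fin k → Set (EuclideanSpace ℝ (Fin (1 + 1))))
    (hcov : IsNMFoldCover 1 m F) (hanti : IsAntipodalFamily F) :
    m + 2 ≤ k := by
  by_contra! hk
  obtain ⟨i₀, hsouth, hnorth⟩ := exists_neg_openNorth_subset_of_card_le hcov hanti (by omega)
  obtain ⟨⟨-, hopen, hone⟩, -⟩ := hcov
  set p : EuclideanSpace ℝ (Fin (1 + 1)) := EuclideanSpace.single 0 1
  have hp : p ∈ sphereSet 1 := by simp [p, sphereSet]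
  have hp₀ : p (Fin.last 1) = 0 := by simp [p]
  obtain ⟨j, hj⟩ := exists_mem_of_covCount_pos (hone p hp)
  by_cases hji : j = i₀
  · subst hji
    exact Set.disjoint_left.1 ((hopen j).disjoint_closure_of_neg_subset (hanti j)
      openNorth_subset_sphereSet hsouth) hj (mem_closure_openNorth hp hp₀)
  · exact Set.disjoint_left.1 ((hopen j).disjoint_closure_of_neg_subset (hanti j)
      neg_openNorth_subset_sphereSet (by simpa using hnorth j hji)) hj
      (mem_closure_neg_openNorth hp hp₀)

/-- Lower bound of Proposition 5: `f(1,1,m) ≥ 2 + m`. Every antipodal `(1,m)`-fold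
cover of the circle `S^1` by `k` open sets satisfies `k ≥ m + 2`. -/
theorem f_circle_lower_bound (m k : ℕ) (hm : 1 < m)
    (F : Fin k → Set (EuclideanSpace ℝ (Fin (1 + 1))))
    (hcov : IsNMFoldCover 1 m F) (hanti : IsAntipodalFamily F) :
    m + 2 ≤ k :=
  f_circle_lower_bound_general m k F hcov hanti
end
end

section
/- Let d ≥ 1 and m > n ≥ 1. There exists an antipodal (n,m)-fold cover of S^d consisting of d + n + m open sets. (Upper bound of Theorem 6: f(d,n,m) ≤ d + n + m.) -/
noncomputable section

open scoped RealInnerProductSpace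

/-!
A point `x ∈ S^d` is read as the coefficient vector of a nonzero polynomial `p_x` of degree
`≤ d`. The cover consists of the `d + 2n` open hemispheres `{x | 0 < (-1)^j p_x(j)}`, `j < d + 2n`,
and `m - n` copies of the northern hemisphere; each is cut out by a linear functional, hence
contains no antipodal pair. A nonzero `p` of degree `≤ d` satisfies `0 < (-1)^j p(j)` for at least
`n` of the points `j < d + 2n`: otherwise, multiplying `p` by a polynomial `q` of degree
`≤ 2(n - 1)` that is negative exactly at those points gives `r = p q ≠ 0` of degree
`< d + 2n - 1` with `(-1)^j r(j) ≤ 0` at all `d + 2n` points, and the vanishing of the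
`(d + 2n - 1)`-th forward difference of `r` then forces `r` to vanish at all of them.
-/

open Finset Polynomial

namespace Polynomial

section CommRing

variable {R : Type*} [CommRing R]

theorem sum_choose_mul_neg_one_pow_mul_eval_eq_zero {p : R[X]} {k : ℕ} (hp : p.natDegree < k) :
    ∑ i ∈ range (k + 1), (k.choose i : R) * ((-1) ^ i * p.eval (i : R)) = 0 := by
  have hdiff := congrFun (fwdDiff_iter_eq_zero_of_degree_lt hp) 0
  rw [fwdDiff_iter_eq_sum_shift, Pi.zero_apply] at hdiff
  rw [← mul_zero ((-1 : R) ^ k), ← hdiff, mul_sum]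
  refine sum_congr rfl fun i hi => ?_
  obtain ⟨j, rfl⟩ := Nat.exists_eq_add_of_le (Nat.lt_succ_iff.mp (mem_range.mp hi))
  have hsq : ((-1 : R) ^ j) ^ 2 = 1 := by rw [← pow_mul, mul_comm, pow_mul, neg_one_sq, one_pow]
  simp only [Nat.add_sub_cancel_left, zero_add, nsmul_one, zsmul_eq_mul, Int.cast_mul,
    Int.cast_pow, Int.cast_neg, Int.cast_one, Int.cast_natCast, pow_add]
  linear_combination (-(((i + j).choose i : R) * (-1) ^ i * p.eval (i : R))) * hsq

end CommRing

variable {R : Type*} [CommRing R] [LinearOrder R] [IsStrictOrderedRing R]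

theorem eq_zero_of_neg_one_pow_mul_eval_nonpos {p : R[X]} {k : ℕ} (hp : p.natDegree < k)
    (hsign : ∀ i ≤ k, (-1) ^ i * p.eval (i : R) ≤ 0) : p = 0 := by
  have hterm : ∀ i ∈ range (k + 1), (k.choose i : R) * ((-1) ^ i * p.eval (i : R)) ≤ 0 :=
    fun i hi => mul_nonpos_of_nonneg_of_nonpos (Nat.cast_nonneg _)
      (hsign i (Nat.lt_succ_iff.mp (mem_range.mp hi)))
  have hzero :=
    (sum_eq_zero_iff_of_nonpos hterm).mp (sum_choose_mul_neg_one_pow_mul_eval_eq_zero hp)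
  refine eq_zero_of_natDegree_lt_card_of_eval_eq_zero p
    (f := fun i : Fin (k + 1) => ((i : ℕ) : R))
    (Nat.cast_injective.comp Fin.val_injective) (fun i => ?_)
    (by simpa using hp.trans k.lt_succ_self)
  have hi := hzero i (mem_range.mpr i.isLt)
  have hchoose : (k.choose i : R) ≠ 0 := Nat.cast_ne_zero.mpr (Nat.choose_pos i.is_le).ne'
  simpa [hchoose] using hi

theorem exists_eval_nat_neg_of_mem_pos_of_notMem (A : Finset ℕ) :
    ∃ q : R[X], q.natDegree ≤ 2 * #A ∧ (∀ j ∈ A, q.eval (j : R) < 0) ∧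
      ∀ j ∉ A, 0 < q.eval (j : R) := by
  have hfactor : ∀ j a : ℕ, j ≠ a → 0 < 4 * ((j : R) - a) ^ 2 - 1 := by
    intro j a hja
    have : (1 : R) ≤ ((j : R) - a) ^ 2 := by
      rcases Nat.lt_or_gt_of_ne hja with h | h
      · have : (j : R) + 1 ≤ a := by exact_mod_cast h
        nlinarith
      · have : (a : R) + 1 ≤ j := by exact_mod_cast h
        nlinarith
    linarith
  refine ⟨∏ a ∈ A, (C 4 * (X - C (a : R)) ^ 2 - 1), ?_, fun j hj => ?_, fun j hj => ?_⟩
  · refine (natDegree_prod_le _ _).trans ?_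
    refine (sum_le_card_nsmul _ _ 2 fun a _ => ?_).trans_eq (by rw [smul_eq_mul, mul_comm])
    compute_degree
  · rw [eval_prod, ← mul_prod_erase _ _ hj]
    refine mul_neg_of_neg_of_pos (by simp) (prod_pos fun a ha => ?_)
    simpa using hfactor j a (ne_of_mem_erase ha).symm
  · rw [eval_prod]
    exact prod_pos fun a ha => by simpa using hfactor j a (fun h => hj (h ▸ ha))

theorem le_card_filter_neg_one_pow_mul_eval_pos {p : R[X]} (hp : p ≠ 0) {d : ℕ}
    (hd : p.natDegree ≤ d) (n : ℕ) :
    n ≤ #{j ∈ range (d + 2 * n) | 0 < (-1) ^ (j : ℕ) * p.eval (j : R)} := by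
  by_contra! hA
  set A := {j ∈ range (d + 2 * n) | 0 < (-1) ^ (j : ℕ) * p.eval (j : R)}
  obtain ⟨q, hq_deg, hq_neg, hq_pos⟩ := exists_eval_nat_neg_of_mem_pos_of_notMem (R := R) A
  have hq : q ≠ 0 := by
    rintro rfl
    simpa using hq_pos (d + 2 * n) (by simp [A])
  refine mul_ne_zero hp hq (eq_zero_of_neg_one_pow_mul_eval_nonpos (k := d + 2 * n - 1)
    (natDegree_mul_le.trans_lt (by omega)) fun i hi => ?_)
  rw [eval_mul, ← mul_assoc]
  by_cases hiA : i ∈ A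
  · exact (mul_neg_of_pos_of_neg (mem_filter.mp hiA).2 (hq_neg i hiA)).le
  · have hi' : i ∈ range (d + 2 * n) := mem_range.mpr (by omega)
    exact mul_nonpos_of_nonpos_of_nonneg (not_lt.mp fun h => hiA (mem_filter.mpr ⟨hi', h⟩))
      (hq_pos i hiA).le

end Polynomial

theorem Fin.card_filter_univ_eq_card_filter_range (K : ℕ) (p : ℕ → Prop) [DecidablePred p] :
    #{i : Fin K | p i} = #{i ∈ range K | p i} := by
  simp only [card_filter]
  exact Fin.sum_univ_eq_sum_range (fun i => if p i then 1 else 0) K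

theorem Finset.card_filter_range_add (p : ℕ → Prop) [DecidablePred p] (a b : ℕ) :
    #{i ∈ range (a + b) | p i} = #{i ∈ range a | p i} + #{i ∈ range b | p (a + i)} := by
  simp only [card_filter, sum_range_add]

section Hemispheres

variable {d k : ℕ}

def hemisphereFamily (g : Fin k → EuclideanSpace ℝ (Fin (d + 1)) →L[ℝ] ℝ) :
    Fin k → Set (EuclideanSpace ℝ (Fin (d + 1))) :=
  fun i => {x | 0 < g i x} ∩ sphereSet d

variable (g : Fin k → EuclideanSpace ℝ (Fin (d + 1)) →L[ℝ] ℝ)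

theorem isAntipodalFamily_hemisphereFamily : IsAntipodalFamily (hemisphereFamily g) := by
  rintro i x ⟨hx, -⟩ ⟨hnx, -⟩
  have hx : 0 < g i x := hx
  have hnx : 0 < g i (-x) := hnx
  rw [map_neg] at hnx
  linarith

theorem covCount_hemisphereFamily {x : EuclideanSpace ℝ (Fin (d + 1))} (hx : x ∈ sphereSet d) :
    covCount (hemisphereFamily g) x = #{i | 0 < g i x} := by
  classical
  rw [covCount, Nat.card_eq_fintype_card, Fintype.card_subtype]
  simp [hemisphereFamily, hx]

theorem isNMFoldCover_hemisphereFamily {n m : ℕ}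
    (hn : ∀ x ∈ sphereSet d, n ≤ #{i | 0 < g i x})
    (hm : ∀ x ∈ openNorth d, m ≤ #{i | 0 < g i x}) :
    IsNMFoldCover n m (hemisphereFamily g) := by
  refine ⟨⟨fun i => Set.inter_subset_right,
    fun i => ⟨_, isOpen_lt continuous_const (g i).continuous, rfl⟩, fun x hx => ?_⟩, fun x hx => ?_⟩
  · exact (covCount_hemisphereFamily g hx).symm ▸ hn x hx
  · exact (covCount_hemisphereFamily g hx.1).symm ▸ hm x hx

end Hemispheres

def momentFunctional (d : ℕ) (t : ℝ) : EuclideanSpace ℝ (Fin (d + 1)) →L[ℝ] ℝ :=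
  LinearMap.toContinuousLinearMap
    (leval t ∘ₗ ofFn (d + 1) ∘ₗ (WithLp.linearEquiv 2 ℝ (Fin (d + 1) → ℝ)).toLinearMap)

def coverFunctional (d n i : ℕ) : EuclideanSpace ℝ (Fin (d + 1)) →L[ℝ] ℝ :=
  if i < d + 2 * n then (-1 : ℝ) ^ i • momentFunctional d i else EuclideanSpace.proj (Fin.last d)

theorem le_card_filter_neg_one_pow_mul_momentFunctional_pos {d : ℕ}
    {x : EuclideanSpace ℝ (Fin (d + 1))} (hx : x ∈ sphereSet d) (n : ℕ) :
    n ≤ #{j ∈ range (d + 2 * n) | 0 < (-1) ^ (j : ℕ) * momentFunctional d j x} := by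
  have hx0 : ofFn (d + 1) x ≠ 0 := by
    rw [Ne, map_eq_zero_iff _ (injective_ofFn _), WithLp.ofLp_eq_zero]
    rintro rfl
    simp [sphereSet] at hx
  exact le_card_filter_neg_one_pow_mul_eval_pos hx0
    (Nat.lt_succ_iff.mp (ofFn_natDegree_lt d.succ_pos x)) n

theorem card_coverFunctional_pos {d n m : ℕ} (hnm : n ≤ m) (x : EuclideanSpace ℝ (Fin (d + 1))) :
    #{i : Fin (d + n + m) | 0 < coverFunctional d n i x} =
      #{j ∈ range (d + 2 * n) | 0 < (-1) ^ (j : ℕ) * momentFunctional d j x} +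
        if 0 < x (Fin.last d) then m - n else 0 := by
  rw [Fin.card_filter_univ_eq_card_filter_range _ fun j => 0 < coverFunctional d n j x,
    show d + n + m = d + 2 * n + (m - n) by omega, card_filter_range_add]
  congr 1
  · refine congrArg card (filter_congr fun j hj => ?_)
    simp [coverFunctional, mem_range.mp hj]
  · rw [filter_congr (q := fun _ => 0 < x (Fin.last d)) fun j _ => by simp [coverFunctional]]
    split_ifs with h <;> simp [h]

theorem f_upper_bound_general (d n m : ℕ) (hnm : n < m) :
    ∃ F : Fin (d + n + m) → Set (EuclideanSpace ℝ (Fin (d + 1))),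
      IsNMFoldCover n m F ∧ IsAntipodalFamily F := by
  refine ⟨_, isNMFoldCover_hemisphereFamily (fun i => coverFunctional d n i)
    (fun x hx => ?_) (fun x hx => ?_), isAntipodalFamily_hemisphereFamily _⟩
  · rw [card_coverFunctional_pos hnm.le]
    exact le_add_right (le_card_filter_neg_one_pow_mul_momentFunctional_pos hx n)
  · rw [card_coverFunctional_pos hnm.le, if_pos hx.2]
    have := le_card_filter_neg_one_pow_mul_momentFunctional_pos hx.1 n
    omega

/-- Upper bound of Theorem 6: `f(d,n,m) ≤ d + n + m`. There exists an antipodal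
`(n,m)`-fold cover of `S^d` with `d + n + m` open sets. -/
theorem f_upper_bound (d n m : ℕ) (hd : 1 ≤ d) (hn : 1 ≤ n) (hnm : n < m) :
    ∃ F : Fin (d + n + m) → Set (EuclideanSpace ℝ (Fin (d + 1))),
      IsNMFoldCover n m F ∧ IsAntipodalFamily F :=
  f_upper_bound_general d n m hnm
end
end

section
/- (Gale's n-fold cover.) For every d ≥ 1 and n ≥ 1, there exist points p_1, …, p_{d+2n} on the unit sphere S^d ⊂ ℝ^{d+1} such that the family of open hemispheres H_i = { x ∈ S^d : ⟨x, p_i⟩ > 0 }, for i = 1, …, d + 2n, is an antipodal n-fold cover of S^d: every point of S^d lies in at least n of the sets H_i, and no H_i contains a pair of antipodal points x and −x. -/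
noncomputable section

open scoped RealInnerProductSpace

/-!
Take `p i` proportional to `(-1)^i (1, i, i², …, i^d)` for `i < d + 2n`. For `x ∈ S^d`,
`⟪x, p i⟫` has the sign of `(-1)^i P(i)`, where `P = ∑ x_j t^j` is a nonzero polynomial of
degree at most `d`. If the set `G` of indices where this is positive had fewer than `n`
elements, then with `Q = ∏_{g ∈ G} (t - g)²` the product `PQ` has degree below
`m = d + 2n - 1`, so its `m`-th forward difference `∑ (-1)^i (m choose i) P(i) Q(i)` vanishes.
Every term of that sum is `≤ 0`, so all of them vanish, and `P` vanishes at the more than `d`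
points `i ∉ G`.
-/

open Polynomial Finset

theorem Polynomial.sum_range_neg_one_pow_mul_choose_mul_eval_eq_zero {R : Type*} [CommRing R]
    {P : R[X]} {m : ℕ} (hP : P.natDegree < m) :
    ∑ i ∈ range (m + 1), (-1) ^ i * m.choose i * P.eval (i : R) = 0 := by
  have h := congrFun (fwdDiff_iter_eq_zero_of_degree_lt hP) 0
  rw [fwdDiff_iter_eq_sum_shift, Pi.zero_apply] at h
  rw [← neg_one_pow_mul_eq_zero_iff (n := m), mul_sum, ← h]
  refine sum_congr rfl fun i hi => ?_
  obtain ⟨j, rfl⟩ := Nat.exists_eq_add_of_le (mem_range_succ_iff.1 hi)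
  have h_sq : ((-1 : R) ^ i) ^ 2 = 1 := by rw [← pow_mul, mul_comm, pow_mul, neg_one_sq, one_pow]
  simp only [zsmul_eq_mul, nsmul_eq_mul, mul_one, zero_add, Nat.add_sub_cancel_left, pow_add]
  push_cast
  linear_combination ((-1 : R) ^ j * (i + j).choose i * P.eval (i : R)) * h_sq

theorem Polynomial.eval_eq_zero_of_neg_one_pow_mul_eval_nonpos {P : ℝ[X]} {m : ℕ}
    (G : Finset (Fin (m + 1))) (hdeg : P.natDegree + 2 * #G < m)
    (hP : ∀ i ∉ G, (-1) ^ (i : ℕ) * P.eval (i : ℝ) ≤ 0) (i : Fin (m + 1)) (hi : i ∉ G) :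
    P.eval (i : ℝ) = 0 := by
  set Q := (∏ g ∈ G, (X - C ((g : ℕ) : ℝ))) ^ 2
  have hQ_eval (t : ℝ) : Q.eval t = (∏ g ∈ G, (t - g)) ^ 2 := by simp [Q, eval_prod]
  have hQ_pos : 0 < Q.eval (i : ℝ) := by
    rw [hQ_eval]
    refine even_two.pow_pos (prod_ne_zero_iff.2 fun g hg => sub_ne_zero.2 fun h => hi ?_)
    rwa [Fin.ext (Nat.cast_injective h)]
  have hdeg_PQ : (P * Q).natDegree < m := by
    have hQ_deg : Q.natDegree = 2 * #G := by
      rw [natDegree_pow, natDegree_finsetProd_X_sub_C_eq_card, mul_comm]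
    have := natDegree_mul_le (p := P) (q := Q)
    omega
  have hsum := sum_range_neg_one_pow_mul_choose_mul_eval_eq_zero hdeg_PQ
  rw [← Fin.sum_univ_eq_sum_range] at hsum
  have h_term (j : Fin (m + 1)) : (-1) ^ (j : ℕ) * m.choose j * (P * Q).eval (j : ℝ) =
      m.choose j * Q.eval (j : ℝ) * ((-1) ^ (j : ℕ) * P.eval (j : ℝ)) := by
    rw [eval_mul]; ring
  simp_rw [h_term] at hsum
  have h_nonpos (j : Fin (m + 1)) (_ : j ∈ univ) :
      m.choose j * Q.eval (j : ℝ) * ((-1) ^ (j : ℕ) * P.eval (j : ℝ)) ≤ 0 := by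
    by_cases hj : j ∈ G
    · rw [hQ_eval, prod_eq_zero hj (sub_self _)]
      simp
    · have hQ_nonneg : 0 ≤ Q.eval (j : ℝ) := by rw [hQ_eval]; positivity
      exact mul_nonpos_of_nonneg_of_nonpos (by positivity) (hP j hj)
  have h_choose : (0 : ℝ) < m.choose i := Nat.cast_pos.2 (Nat.choose_pos (Nat.lt_succ_iff.1 i.2))
  simpa [h_choose.ne', hQ_pos.ne'] using (sum_eq_zero_iff_of_nonpos h_nonpos).1 hsum i (mem_univ i)

theorem Polynomial.le_card_filter_neg_one_pow_mul_eval_pos_s15 {P : ℝ[X]} (hP : P ≠ 0) {d n k : ℕ}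
    (hdeg : P.natDegree ≤ d) (hk : d + 2 * n ≤ k) :
    n ≤ #{i : Fin k | 0 < (-1) ^ (i : ℕ) * P.eval (i : ℝ)} := by
  set G := ({i : Fin k | 0 < (-1) ^ (i : ℕ) * P.eval (i : ℝ)} : Finset (Fin k))
  by_contra! hG
  obtain ⟨m, rfl⟩ : ∃ m, k = m + 1 := ⟨k - 1, by omega⟩
  have h_root := eval_eq_zero_of_neg_one_pow_mul_eval_nonpos (P := P) G (by omega)
    fun i hi => by simpa [G] using hi
  refine hP (eq_zero_of_natDegree_lt_card_of_eval_eq_zero' P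
    ((univ \ G).image fun i : Fin (m + 1) => ((i : ℕ) : ℝ)) (by simpa using h_root) ?_)
  rw [card_image_of_injective _ fun a b h => Fin.ext (Nat.cast_injective h),
    card_sdiff_of_subset (subset_univ G), card_univ, Fintype.card_fin]
  omega

def coordPoly {d : ℕ} (x : EuclideanSpace ℝ (Fin (d + 1))) : ℝ[X] :=
  ∑ j : Fin (d + 1), C (x j) * X ^ (j : ℕ)

def altMomentCurve (d t : ℕ) : EuclideanSpace ℝ (Fin (d + 1)) :=
  WithLp.toLp 2 fun j => (-1) ^ t * (t : ℝ) ^ (j : ℕ)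

theorem altMomentCurve_ne_zero (d t : ℕ) : altMomentCurve d t ≠ 0 := by
  intro h
  simpa [altMomentCurve] using congrArg (· 0) h

section
variable {d : ℕ} (x : EuclideanSpace ℝ (Fin (d + 1)))

theorem coeff_coordPoly (j : Fin (d + 1)) : (coordPoly x).coeff j = x j := by
  simp [coordPoly, Fin.val_inj]

theorem natDegree_coordPoly_le : (coordPoly x).natDegree ≤ d :=
  natDegree_sum_le_of_forall_le _ _ fun j _ =>
    (natDegree_C_mul_X_pow_le _ _).trans (Nat.lt_succ_iff.1 j.2)

theorem coordPoly_ne_zero (hx : x ≠ 0) : coordPoly x ≠ 0 := by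
  contrapose! hx
  ext j
  rw [← coeff_coordPoly, hx, coeff_zero, PiLp.zero_apply]

theorem inner_altMomentCurve (t : ℕ) :
    ⟪x, altMomentCurve d t⟫ = (-1) ^ t * (coordPoly x).eval (t : ℝ) := by
  simp only [altMomentCurve, coordPoly, PiLp.inner_apply, eval_finsetSum, mul_sum, eval_mul,
    eval_C, eval_pow, eval_X, RCLike.inner_apply, conj_trivial]
  exact sum_congr rfl fun j _ => by ring

end

theorem gale_cover_general (d n : ℕ) :
    ∃ p : Fin (d + 2 * n) → EuclideanSpace ℝ (Fin (d + 1)),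
      (∀ i, p i ∈ sphereSet d) ∧
      (∀ x ∈ sphereSet d,
        n ≤ covCount (fun i : Fin (d + 2 * n) => {y ∈ sphereSet d | 0 < ⟪y, p i⟫}) x) ∧
      IsAntipodalFamily (fun i : Fin (d + 2 * n) => {y ∈ sphereSet d | 0 < ⟪y, p i⟫}) := by
  refine ⟨fun i => ‖altMomentCurve d i‖⁻¹ • altMomentCurve d i, fun i => ?_, fun x hx => ?_,
    fun i x hx hnx => ?_⟩
  · simp [sphereSet, norm_smul, altMomentCurve_ne_zero]
  · classical
    have hx0 : x ≠ 0 := by rintro rfl; simp [sphereSet] at hx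
    rw [covCount, Nat.card_eq_fintype_card, Fintype.card_subtype]
    refine (le_card_filter_neg_one_pow_mul_eval_pos_s15 (coordPoly_ne_zero x hx0)
      (natDegree_coordPoly_le x) le_rfl).trans_eq (congrArg card (filter_congr fun i _ => ?_))
    simp [hx, real_inner_smul_right, inner_altMomentCurve, altMomentCurve_ne_zero]
  · have h_neg := hnx.2
    rw [inner_neg_left] at h_neg
    linarith [hx.2]

/-- Gale's `n`-fold cover: there are points `p_1, …, p_{d+2n}` on `S^d` such that the
open hemispheres `H i = { x ∈ S^d : ⟪x, p i⟫ > 0 }` form an antipodal `n`-fold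
cover of `S^d`. -/
theorem gale_cover (d n : ℕ) (hd : 1 ≤ d) (hn : 1 ≤ n) :
    ∃ p : Fin (d + 2 * n) → EuclideanSpace ℝ (Fin (d + 1)),
      (∀ i, p i ∈ sphereSet d) ∧
      (∀ x ∈ sphereSet d,
        n ≤ covCount (fun i : Fin (d + 2 * n) => {y ∈ sphereSet d | 0 < ⟪y, p i⟫}) x) ∧
      IsAntipodalFamily (fun i : Fin (d + 2 * n) => {y ∈ sphereSet d | 0 < ⟪y, p i⟫}) :=
  gale_cover_general d n
end
end
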